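/- arXiv:1404.6898 — 10 statements merged into one kernel-verified Lean document; each statement's English description precedes it below -/
import Mathlib

section
/- Let X be a finite nonempty set, P ⊆ X a subset, and k an integer with 1 ≤ k ≤ |X|. Set φ := |P|/|X| and let δ ∈ [0, φ] be a real number. If S is chosen uniformly at random among all k-element subsets of X, then Pr[|P ∩ S| < δ·k] ≤ exp(−2k(φ − δ)²). -/
/-!
Write `Q` for the complement of `P`: few points of `P` in `S` means many points of `Q`, so it
suffices to bound the upper tail of the hypergeometric count `|S ∩ Q|` by Chernoff's method.
Expanding `(1 + y) ^ |S ∩ Q|` binomially and double counting pairs `T ⊆ S` with `T ⊆ Q`, `|T| = j`,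
gives `∑_S C(|S ∩ Q|, j) = C(|Q|, j) C(n - j, k - j) ≤ C(n, k) C(k, j) (|Q| / n) ^ j`, so the moment
generating function of `|S ∩ Q|` is dominated by that of a binomial variable (Hoeffding's comparison
of sampling without and with replacement). Hoeffding's lemma bounds each Bernoulli factor by
`exp (a h + h ^ 2 / 8)`, and Markov's inequality with `h = 4 t` yields `exp (-2 k t ^ 2)`.
-/

open Finset Real MeasureTheory ProbabilityTheory

theorem Real.one_sub_add_mul_exp_le_exp {a : ℝ} (ha0 : 0 ≤ a) (ha1 : a ≤ 1) (t : ℝ) :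
    1 - a + a * exp t ≤ exp (a * t + t ^ 2 / 8) := by
  set μ : Measure ℝ := Ber((1 : ℝ), 0, ⟨a, ha0, ha1⟩)
  have hIcc : ∀ᵐ x ∂μ, x ∈ Set.Icc (0 : ℝ) 1 :=
    ae_iff.2 (bernoulliMeasure_apply_of_notMem_of_notMem _ measurableSet_Icc.compl
      (by simp) (by simp))
  have hmgf := (hasSubgaussianMGF_of_mem_Icc aemeasurable_id hIcc).mgf_le t
  simp only [mgf, μ, integral_bernoulliMeasure] at hmgf
  norm_num at hmgf
  have hcentered : a * exp (t * (1 - a)) + (1 - a) * exp (-(t * a))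
      = exp (-(a * t)) * (1 - a + a * exp t) := by
    rw [show t * (1 - a) = t + -(a * t) by ring, exp_add, mul_comm t a]; ring
  rw [hcentered, exp_neg, inv_mul_le_iff₀ (exp_pos _), ← exp_add] at hmgf
  exact hmgf.trans_eq (by ring_nf)

theorem Nat.descFactorial_mul_pow_le_descFactorial_mul_pow {q n : ℕ} (hqn : q ≤ n) (j : ℕ) :
    q.descFactorial j * n ^ j ≤ n.descFactorial j * q ^ j := by
  induction j with
  | zero => simp
  | succ j ih =>
    have hstep : (q - j) * n ≤ (n - j) * q := by
      rw [Nat.sub_mul, Nat.sub_mul, mul_comm q n]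
      exact Nat.sub_le_sub_left (Nat.mul_le_mul_left j hqn) _
    calc q.descFactorial (j + 1) * n ^ (j + 1)
        = ((q - j) * n) * (q.descFactorial j * n ^ j) := by
          rw [Nat.descFactorial_succ, pow_succ]; ring
      _ ≤ ((n - j) * q) * (n.descFactorial j * q ^ j) := Nat.mul_le_mul hstep ih
      _ = n.descFactorial (j + 1) * q ^ (j + 1) := by
          rw [Nat.descFactorial_succ, pow_succ]; ring

theorem Nat.choose_mul_pow_le_choose_mul_pow {q n : ℕ} (hqn : q ≤ n) (j : ℕ) :
    q.choose j * n ^ j ≤ n.choose j * q ^ j := by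
  have h := Nat.descFactorial_mul_pow_le_descFactorial_mul_pow hqn j
  rw [Nat.descFactorial_eq_factorial_mul_choose, Nat.descFactorial_eq_factorial_mul_choose,
    mul_assoc, mul_assoc] at h
  exact Nat.le_of_mul_le_mul_left h j.factorial_pos

theorem one_add_pow_eq_sum_range_choose_mul_pow {R : Type*} [CommSemiring R] (y : R) {m k : ℕ}
    (hmk : m ≤ k) : (1 + y) ^ m = ∑ j ∈ range (k + 1), (m.choose j : R) * y ^ j := by
  rw [add_comm, add_pow, sum_subset (range_subset_range.2 (Nat.succ_le_succ hmk))]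
  · exact sum_congr rfl fun j _ => by rw [one_pow, mul_one, mul_comm]
  · intro j _ hj
    simp [Nat.choose_eq_zero_of_lt (by simpa using hj : m < j)]

section Sampling

variable {α : Type*} [Fintype α] [DecidableEq α]

theorem Finset.sum_choose_card_inter_powersetCard (s : Finset α) {j k : ℕ} (hjk : j ≤ k) :
    ∑ S ∈ (univ : Finset α).powersetCard k, (#(S ∩ s)).choose j
      = (#s).choose j * (Fintype.card α - j).choose (k - j) := by
  calc ∑ S ∈ (univ : Finset α).powersetCard k, (#(S ∩ s)).choose j
      = ∑ S ∈ (univ : Finset α).powersetCard k,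
          ∑ T ∈ s.powersetCard j, if T ⊆ S then 1 else 0 := by
        refine sum_congr rfl fun S _ => ?_
        rw [← card_powersetCard, sum_boole, Nat.cast_id]
        congr 1; ext T; simp [subset_inter_iff, and_comm, and_assoc]
    _ = ∑ T ∈ s.powersetCard j, #((univ.powersetCard k).filter (T ⊆ ·)) := by
        rw [sum_comm]; simp only [sum_boole, Nat.cast_id]
    _ = (#s).choose j * (Fintype.card α - j).choose (k - j) := by
        rw [← card_powersetCard, card_eq_sum_ones, sum_mul, one_mul]
        refine sum_congr rfl fun T hT => ?_
        obtain ⟨-, hTj⟩ := mem_powersetCard.1 hT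
        rw [card_filter_powersetCard_subset T univ k (subset_univ T) (hTj ▸ hjk), hTj, card_univ]

variable [Nonempty α]

theorem Finset.sum_one_add_pow_card_inter_powersetCard_le (s : Finset α) (k : ℕ)
    {y : ℝ} (hy : 0 ≤ y) :
    ∑ S ∈ (univ : Finset α).powersetCard k, (1 + y) ^ #(S ∩ s)
      ≤ (Fintype.card α).choose k * (1 + #s / Fintype.card α * y) ^ k := by
  set n := Fintype.card α
  have hn : (0 : ℝ) < n := by exact_mod_cast Fintype.card_pos
  have hcoeff : ∀ j ≤ k, ((#s).choose j * (n - j).choose (k - j) : ℝ)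
      ≤ n.choose k * k.choose j * (#s / n) ^ j := by
    intro j hjk
    have hchoose : (n.choose k * k.choose j : ℝ) = n.choose j * (n - j).choose (k - j) := by
      exact_mod_cast Nat.choose_mul hjk
    have hpow : ((#s).choose j * n ^ j : ℝ) ≤ n.choose j * #s ^ j := by
      exact_mod_cast Nat.choose_mul_pow_le_choose_mul_pow (card_le_univ s) j
    rw [hchoose, div_pow, mul_div_assoc', le_div_iff₀ (pow_pos hn j)]
    calc ((#s).choose j * (n - j).choose (k - j) : ℝ) * n ^ j
        = ((#s).choose j * n ^ j) * (n - j).choose (k - j) := by ring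
      _ ≤ (n.choose j * #s ^ j) * (n - j).choose (k - j) := by gcongr
      _ = _ := by ring
  calc ∑ S ∈ (univ : Finset α).powersetCard k, (1 + y) ^ #(S ∩ s)
      = ∑ S ∈ (univ : Finset α).powersetCard k, ∑ j ∈ range (k + 1),
          ((#(S ∩ s)).choose j : ℝ) * y ^ j := by
        refine sum_congr rfl fun S hS => one_add_pow_eq_sum_range_choose_mul_pow y ?_
        exact (card_le_card inter_subset_left).trans (mem_powersetCard.1 hS).2.le
    _ = ∑ j ∈ range (k + 1), ((#s).choose j * (n - j).choose (k - j) : ℝ) * y ^ j := by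
        rw [sum_comm]
        refine sum_congr rfl fun j hj => ?_
        rw [← sum_mul, ← Nat.cast_sum,
          sum_choose_card_inter_powersetCard s (Nat.lt_succ_iff.1 (mem_range.1 hj)), Nat.cast_mul]
    _ ≤ ∑ j ∈ range (k + 1), (n.choose k * k.choose j * (#s / n) ^ j : ℝ) * y ^ j := by
        refine sum_le_sum fun j hj => mul_le_mul_of_nonneg_right ?_ (pow_nonneg hy j)
        exact hcoeff j (Nat.lt_succ_iff.1 (mem_range.1 hj))
    _ = n.choose k * (1 + #s / n * y) ^ k := by
        rw [one_add_pow_eq_sum_range_choose_mul_pow _ le_rfl, mul_sum]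
        exact sum_congr rfl fun j _ => by ring

theorem Finset.sum_exp_mul_card_inter_powersetCard_le (s : Finset α) (k : ℕ)
    {h : ℝ} (hh : 0 ≤ h) :
    ∑ S ∈ (univ : Finset α).powersetCard k, exp (h * #(S ∩ s))
      ≤ (Fintype.card α).choose k * exp (k * (#s / Fintype.card α * h + h ^ 2 / 8)) := by
  set a : ℝ := #s / Fintype.card α
  have ha0 : 0 ≤ a := by positivity
  have ha1 : a ≤ 1 := div_le_one_of_le₀ (by exact_mod_cast card_le_univ s) (by positivity)
  have hy : 0 ≤ exp h - 1 := sub_nonneg.2 (one_le_exp hh)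
  calc ∑ S ∈ (univ : Finset α).powersetCard k, exp (h * #(S ∩ s))
      = ∑ S ∈ (univ : Finset α).powersetCard k, (1 + (exp h - 1)) ^ #(S ∩ s) := by
        simp only [add_sub_cancel, ← exp_nat_mul, mul_comm h]
    _ ≤ (Fintype.card α).choose k * (1 - a + a * exp h) ^ k := by
        convert sum_one_add_pow_card_inter_powersetCard_le s k hy using 3; ring
    _ ≤ (Fintype.card α).choose k * exp (a * h + h ^ 2 / 8) ^ k := by
        gcongr
        exact one_sub_add_mul_exp_le_exp ha0 ha1 h
    _ = (Fintype.card α).choose k * exp (k * (a * h + h ^ 2 / 8)) := by rw [exp_nat_mul]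

theorem Finset.card_filter_le_card_inter_powersetCard_le (s : Finset α) (k : ℕ)
    {t : ℝ} (ht : 0 ≤ t) :
    #(((univ : Finset α).powersetCard k).filter
        fun S => k * (#s / Fintype.card α + t) ≤ #(S ∩ s))
      ≤ (Fintype.card α).choose k * exp (-(2 * k * t ^ 2)) := by
  set a : ℝ := #s / Fintype.card α
  set F := ((univ : Finset α).powersetCard k).filter fun S => k * (a + t) ≤ #(S ∩ s)
  -- `h = 4 t` minimises the Chernoff exponent `k (h ^ 2 / 8 - h t)`.
  have hmarkov : #F * exp (4 * t * (k * (a + t)))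
      ≤ ∑ S ∈ (univ : Finset α).powersetCard k, exp (4 * t * #(S ∩ s)) := by
    calc #F * exp (4 * t * (k * (a + t)))
        = ∑ S ∈ F, exp (4 * t * (k * (a + t))) := by rw [sum_const, nsmul_eq_mul]
      _ ≤ ∑ S ∈ F, exp (4 * t * #(S ∩ s)) := by
          gcongr with S hS
          exact (mem_filter.1 hS).2
      _ ≤ _ := sum_le_sum_of_subset_of_nonneg (filter_subset _ _) fun _ _ _ => (exp_pos _).le
  have hmgf := sum_exp_mul_card_inter_powersetCard_le s k (by positivity : 0 ≤ 4 * t)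
  have hexp : exp (k * (a * (4 * t) + (4 * t) ^ 2 / 8))
      = exp (-(2 * k * t ^ 2)) * exp (4 * t * (k * (a + t))) := by
    rw [← exp_add]; ring_nf
  rw [hexp, ← mul_assoc] at hmgf
  exact le_of_mul_le_mul_right (hmarkov.trans hmgf) (exp_pos _)

end Sampling

open scoped Classical

theorem stmt1_general {α : Type*} [Fintype α] [Nonempty α] [DecidableEq α] (P : Finset α)
    (k : ℕ) (δ : ℝ) (hδφ : δ ≤ (P.card : ℝ) / (Fintype.card α : ℝ)) :
    ((((Finset.univ : Finset α).powersetCard k).filter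
          (fun S => ((P ∩ S).card : ℝ) < δ * k)).card : ℝ) /
        ((((Finset.univ : Finset α).powersetCard k).card : ℝ))
      ≤ Real.exp (-(2 * k * ((P.card : ℝ) / (Fintype.card α : ℝ) - δ) ^ 2)) := by
  set φ : ℝ := #P / Fintype.card α with hφ_def
  have hφ : (#Pᶜ : ℝ) / Fintype.card α + (φ - δ) = 1 - δ := by
    have : (0 : ℝ) < Fintype.card α := by exact_mod_cast Fintype.card_pos
    rw [card_compl, Nat.cast_sub (card_le_univ P), hφ_def]
    field_simp
    ring
  have hlower_tail : ((univ : Finset α).powersetCard k).filter (fun S => (#(P ∩ S) : ℝ) < δ * k)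
      ⊆ ((univ : Finset α).powersetCard k).filter
          (fun S => k * (#Pᶜ / Fintype.card α + (φ - δ)) ≤ #(S ∩ Pᶜ)) := by
    intro S hS
    obtain ⟨hSk, hlt⟩ := mem_filter.1 hS
    have hsplit : #(P ∩ S) + #(S ∩ Pᶜ) = k := by
      rw [inter_comm, ← sdiff_eq_inter_compl, card_inter_add_card_sdiff,
        (mem_powersetCard.1 hSk).2]
    have hsplit_real : (#(P ∩ S) : ℝ) + #(S ∩ Pᶜ) = k := by exact_mod_cast hsplit
    refine mem_filter.2 ⟨hSk, ?_⟩
    rw [hφ]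
    linarith
  rw [card_powersetCard, card_univ]
  refine div_le_of_le_mul₀ (Nat.cast_nonneg _) (exp_pos _).le ?_
  calc _ ≤ _ := by exact_mod_cast card_le_card hlower_tail
    _ ≤ _ := card_filter_le_card_inter_powersetCard_le Pᶜ k (sub_nonneg.2 hδφ)
    _ = _ := mul_comm _ _

theorem stmt1 {α : Type*} [Fintype α] [Nonempty α] [DecidableEq α] (P : Finset α)
    (k : ℕ) (hk1 : 1 ≤ k) (hk2 : k ≤ Fintype.card α)
    (δ : ℝ) (hδ0 : 0 ≤ δ) (hδφ : δ ≤ (P.card : ℝ) / (Fintype.card α : ℝ)) :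
    ((((Finset.univ : Finset α).powersetCard k).filter
          (fun S => ((P ∩ S).card : ℝ) < δ * k)).card : ℝ) /
        ((((Finset.univ : Finset α).powersetCard k).card : ℝ))
      ≤ Real.exp (-(2 * k * ((P.card : ℝ) / (Fintype.card α : ℝ) - δ) ^ 2)) :=
  stmt1_general P k δ hδφ
end

section
/- Let X be a finite nonempty set, Y a countable set, and D a probability distribution on Y. Let O : X → Y be a random function whose values O(x), x ∈ X, are independent and each distributed according to D. Let y₁ be distributed according to D independently of O, and let y₂ := O(x) for x chosen uniformly from X independently of O. Then SD((O, y₁); (O, y₂)) ≤ (1/(2√|X|)) · 2^{H_{1/2}(D)/2}, where H_{1/2}(D) := 2·log₂(Σ_{y∈Y} √(D(y))) is the Rényi entropy of order 1/2 of D. In particular, if Y is finite, SD((O, y₁); (O, y₂)) ≤ (1/2)·√(|Y|/|X|). -/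
/-!
For a fixed `y`, the number `c_y(O)` of points `x` with `O x = y` is binomially distributed with
parameters `|X|` and `D y`, and the `y`-slice of the statistical distance is the mean absolute
deviation of the empirical frequency `c_y(O) / |X|` from its mean `D y`. By Cauchy–Schwarz this is
at most the standard deviation `√(D y (1 - D y) / |X|) ≤ √(D y) / √|X|`, and summing over
`y` gives `(∑ y, √(D y)) / √|X| = 2 ^ (H_{1/2}(D) / 2) / √|X|`. For finite `Y`,
Cauchy–Schwarz again gives `∑ y, √(D y) ≤ √|Y|`.
-/

open scoped Classical

open Finset Filter Topology

theorem hasSum_pi_prod_of_nonneg {X Y : Type*} [Fintype X] {g : X → Y → ℝ} {a : X → ℝ}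
    (hg0 : ∀ x y, 0 ≤ g x y) (hg : ∀ x, HasSum (g x) (a x)) :
    HasSum (fun f : X → Y => ∏ x, g x (f x)) (∏ x, a x) := by
  set box : Finset Y → Finset (X → Y) := fun t => Fintype.piFinset fun _ => t
  have sum_box : ∀ t, ∑ f ∈ box t, ∏ x, g x (f x) = ∏ x, ∑ y ∈ t, g x y := fun t =>
    (prod_univ_sum _ _).symm
  have subset_box : ∀ s : Finset (X → Y), s ⊆ box (s.biUnion fun f => univ.image f) :=
    fun s f hf => Fintype.mem_piFinset.2 fun x =>
      mem_biUnion.2 ⟨f, hf, mem_image_of_mem f (mem_univ x)⟩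
  have hsum : Summable fun f : X → Y => ∏ x, g x (f x) := by
    refine summable_of_sum_le (c := ∏ x, a x) (fun f => prod_nonneg fun x _ => hg0 x _)
      fun s => ?_
    calc ∑ f ∈ s, ∏ x, g x (f x)
        ≤ ∑ f ∈ box _, ∏ x, g x (f x) := sum_le_sum_of_subset_of_nonneg (subset_box s)
          fun f _ _ => prod_nonneg fun x _ => hg0 x _
      _ = ∏ x, ∑ y ∈ _, g x y := sum_box _
      _ ≤ ∏ x, a x := prod_le_prod (fun x _ => sum_nonneg fun y _ => hg0 x y)
          fun x _ => sum_le_hasSum _ (fun y _ => hg0 x y) (hg x)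
  have box_tendsto : Tendsto box atTop atTop :=
    tendsto_atTop_atTop_of_monotone (fun t t' h => Fintype.piFinset_subset _ _ fun _ => h)
      fun s => ⟨_, subset_box s⟩
  have hlim : Tendsto (fun t => ∏ x, ∑ y ∈ t, g x y) atTop (𝓝 (∏ x, a x)) :=
    tendsto_finsetProd _ fun x _ => hg x
  convert hsum.hasSum
  refine tendsto_nhds_unique hlim ?_
  simpa only [Function.comp_def, sum_box] using hsum.hasSum.comp box_tendsto

theorem exists_hasSum_mul_abs_le_sqrt {ι : Type*} {p z : ι → ℝ} {V : ℝ}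
    (hp0 : ∀ i, 0 ≤ p i) (hp : HasSum p 1) (hV : HasSum (fun i => p i * z i ^ 2) V) :
    ∃ C ≤ √V, HasSum (fun i => p i * |z i|) C := by
  have hV0 : 0 ≤ V := hV.nonneg fun i => mul_nonneg (hp0 i) (sq_nonneg _)
  obtain ⟨C, -, hC, hsum⟩ :=
    Real.inner_le_Lp_mul_Lq_hasSum_of_nonneg Real.HolderConjugate.two_two zero_le_one
      (Real.sqrt_nonneg V) (f := fun i => √(p i)) (g := fun i => √(p i) * |z i|)
      (fun i => Real.sqrt_nonneg _) (fun i => mul_nonneg (Real.sqrt_nonneg _) (abs_nonneg _))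
      (by simpa [Real.rpow_two, Real.sq_sqrt (hp0 _)] using hp)
      (by simpa [Real.rpow_two, mul_pow, Real.sq_sqrt (hp0 _), Real.sq_sqrt hV0] using hV)
  refine ⟨C, by simpa using hC, ?_⟩
  simpa [← mul_assoc, Real.mul_self_sqrt (hp0 _)] using hsum

section Moments

variable {X Y : Type*} [Fintype X] {D : Y → ℝ}

theorem hasSum_mul_prod_ite_eq (hD0 : ∀ y, 0 ≤ D y) (hD1 : HasSum D 1) (s : Finset X) (y : Y) :
    HasSum (fun f : X → Y => (∏ x, D (f x)) * ∏ x ∈ s, if f x = y then (1 : ℝ) else 0)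
      (D y ^ #s) := by
  have hg : ∀ x, HasSum (fun z => D z * if x ∈ s then (if z = y then 1 else 0) else 1)
      (if x ∈ s then D y else 1) := by
    intro x
    by_cases hx : x ∈ s
    · simp only [hx, if_true, mul_ite, mul_one, mul_zero]
      convert hasSum_ite_eq y (D y) using 2 with z
      split_ifs with h <;> simp [h]
    · simpa [hx] using hD1
  convert hasSum_pi_prod_of_nonneg (fun x z => ?_) hg using 1
  · ext f
    rw [prod_mul_distrib, prod_ite_mem, univ_inter]
  · rw [prod_ite_mem, univ_inter, prod_const]
  · have := hD0 z
    split_ifs <;> simp [this]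

theorem hasSum_mul_card_fiber (hD0 : ∀ y, 0 ≤ D y) (hD1 : HasSum D 1) (y : Y) :
    HasSum (fun f : X → Y => (∏ x, D (f x)) * #{x | f x = y}) (Fintype.card X * D y) := by
  convert hasSum_sum (s := (univ : Finset X)) fun x _ => hasSum_mul_prod_ite_eq hD0 hD1 {x} y
    using 1
  · ext f
    simp only [natCast_card_filter, mul_sum, prod_singleton]
  · simp

theorem sum_pow_card_pair (d : ℝ) :
    ∑ q : X × X, d ^ #{q.1, q.2} =
      Fintype.card X ^ 2 * d ^ 2 + Fintype.card X * (d - d ^ 2) := by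
  have hpair : ∀ q : X × X, d ^ #{q.1, q.2} = d ^ 2 + if q.1 = q.2 then d - d ^ 2 else 0 := by
    rintro ⟨a, b⟩
    by_cases h : a = b
    · simp [h]
    · simp [h, card_pair h]
  simp only [hpair, sum_add_distrib, Fintype.sum_prod_type, sum_ite_eq, mem_univ, if_true,
    sum_const, card_univ, nsmul_eq_mul, Fintype.card_prod]
  push_cast
  ring

theorem hasSum_mul_card_fiber_sq (hD0 : ∀ y, 0 ≤ D y) (hD1 : HasSum D 1) (y : Y) :
    HasSum (fun f : X → Y => (∏ x, D (f x)) * (#{x | f x = y} : ℝ) ^ 2)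
      (Fintype.card X ^ 2 * D y ^ 2 + Fintype.card X * (D y - D y ^ 2)) := by
  rw [← sum_pow_card_pair]
  convert hasSum_sum (s := (univ : Finset (X × X))) fun q _ =>
    hasSum_mul_prod_ite_eq hD0 hD1 {q.1, q.2} y using 1
  ext f
  rw [natCast_card_filter, sq, sum_mul_sum, ← Fintype.sum_prod_type', mul_sum]
  refine sum_congr rfl fun q _ => ?_
  rw [prod_boole, ite_zero_mul_ite_zero]
  simp

theorem hasSum_mul_sub_card_fiber_div_sq [Nonempty X] (hD0 : ∀ y, 0 ≤ D y) (hD1 : HasSum D 1)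
    (y : Y) :
    HasSum (fun f : X → Y => (∏ x, D (f x)) * (D y - #{x | f x = y} / Fintype.card X) ^ 2)
      (D y * (1 - D y) / Fintype.card X) := by
  set N : ℝ := (Fintype.card X : ℝ)
  have hN : N ≠ 0 := Nat.cast_ne_zero.2 Fintype.card_ne_zero
  have hP : HasSum (fun f : X → Y => ∏ x, D (f x)) 1 := by
    simpa using hasSum_mul_prod_ite_eq (X := X) hD0 hD1 ∅ y
  have hexpand : D y * (1 - D y) / N = 1 * D y ^ 2 - 2 * D y / N * (N * D y) +
      1 / N ^ 2 * (N ^ 2 * D y ^ 2 + N * (D y - D y ^ 2)) := by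
    field_simp
    ring
  rw [hexpand]
  refine (((hP.mul_right (D y ^ 2)).sub
    ((hasSum_mul_card_fiber hD0 hD1 y).mul_left (2 * D y / N))).add
    ((hasSum_mul_card_fiber_sq hD0 hD1 y).mul_left (1 / N ^ 2))).congr_fun fun f => ?_
  field_simp
  ring

theorem exists_hasSum_mul_abs_sub_card_fiber_div_le [Nonempty X] (hD0 : ∀ y, 0 ≤ D y)
    (hD1 : HasSum D 1) (y : Y) :
    ∃ C ≤ √(D y) / √(Fintype.card X),
      HasSum (fun f : X → Y => (∏ x, D (f x)) * |D y - #{x | f x = y} / Fintype.card X|) C := by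
  obtain ⟨C, hC, hsum⟩ := exists_hasSum_mul_abs_le_sqrt
    (fun f => prod_nonneg fun x _ => hD0 (f x))
    (by simpa using hasSum_mul_prod_ite_eq (X := X) hD0 hD1 ∅ y)
    (hasSum_mul_sub_card_fiber_div_sq hD0 hD1 y)
  refine ⟨C, hC.trans ?_, hsum⟩
  rw [← Real.sqrt_div (hD0 y)]
  gcongr
  nlinarith [hD0 y]

end Moments

theorem tsum_abs_sub_card_fiber_div_le {X Y : Type*} [Fintype X] [Nonempty X] {D : Y → ℝ}
    (hD0 : ∀ y, 0 ≤ D y) (hD1 : HasSum D 1) (hsq : Summable fun y => √(D y)) :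
    ∑' p : (X → Y) × Y, |(∏ x, D (p.1 x)) * D p.2 -
        (∏ x, D (p.1 x)) * ((#{x | p.1 x = p.2} : ℝ) / Fintype.card X)|
      ≤ (∑' y, √(D y)) / √(Fintype.card X) := by
  choose C hC hsum using fun y => exists_hasSum_mul_abs_sub_card_fiber_div_le (X := X) hD0 hD1 y
  set F : Y × (X → Y) → ℝ := fun q =>
    (∏ x, D (q.2 x)) * |D q.1 - #{x | q.2 x = q.1} / Fintype.card X|
  have hF0 : 0 ≤ F := fun q => mul_nonneg (prod_nonneg fun x _ => hD0 _) (abs_nonneg _)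
  have hCsum : Summable C :=
    Summable.of_nonneg_of_le (fun y => (hsum y).nonneg fun f => hF0 (y, f)) hC (hsq.div_const _)
  have hF : HasSum F (∑' y, C y) := by
    have hFsum : Summable F := (summable_prod_of_nonneg hF0).2
      ⟨fun y => (hsum y).summable, hCsum.congr fun y => (hsum y).tsum_eq.symm⟩
    simpa only [(hFsum.hasSum.prod_fiberwise hsum).tsum_eq] using hFsum.hasSum
  calc ∑' p : (X → Y) × Y, |(∏ x, D (p.1 x)) * D p.2 -
        (∏ x, D (p.1 x)) * ((#{x | p.1 x = p.2} : ℝ) / Fintype.card X)|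
      = ∑' p : (X → Y) × Y, F p.swap := by
        refine tsum_congr fun p => ?_
        rw [← mul_sub, abs_mul, abs_of_nonneg (prod_nonneg fun x _ => hD0 _)]
        rfl
    _ = ∑' y, C y := ((Equiv.prodComm _ _).hasSum_iff.2 hF).tsum_eq
    _ ≤ ∑' y, √(D y) / √(Fintype.card X) := hCsum.tsum_le_tsum hC (hsq.div_const _)
    _ = (∑' y, √(D y)) / √(Fintype.card X) := tsum_div_const

theorem one_le_tsum_sqrt {Y : Type*} {D : Y → ℝ} (hD0 : ∀ y, 0 ≤ D y) (hD1 : HasSum D 1)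
    (hsq : Summable fun y => √(D y)) : 1 ≤ ∑' y, √(D y) :=
  hasSum_le (fun y => Real.le_sqrt_self_iff.2 (le_hasSum hD1 y fun j _ => hD0 j)) hD1 hsq.hasSum

theorem tsum_sqrt_le_sqrt_natCard {Y : Type*} [Finite Y] {D : Y → ℝ} (hD0 : ∀ y, 0 ≤ D y)
    (hD1 : HasSum D 1) : ∑' y, √(D y) ≤ √(Nat.card Y) := by
  have := Fintype.ofFinite Y
  rw [tsum_fintype, Real.le_sqrt (sum_nonneg fun y _ => Real.sqrt_nonneg _) (Nat.cast_nonneg _)]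
  calc (∑ y, √(D y)) ^ 2
      ≤ #(univ : Finset Y) * ∑ y, √(D y) ^ 2 := sq_sum_le_card_mul_sum_sq
    _ = Nat.card Y := by
      simp only [Real.sq_sqrt (hD0 _), ← hD1.unique (hasSum_fintype D), card_univ,
        Nat.card_eq_fintype_card, mul_one]

theorem stmt2_general {X Y : Type*} [Fintype X] [Nonempty X]
    (D : Y → ℝ) (hD0 : ∀ y, 0 ≤ D y) (hD1 : HasSum D 1)
    (hsq : Summable fun y => Real.sqrt (D y)) :
    (1 / 2 : ℝ) * (∑' p : (X → Y) × Y,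
        |(∏ x, D (p.1 x)) * D p.2 -
          (∏ x, D (p.1 x)) *
            (((Finset.univ.filter fun x => p.1 x = p.2).card : ℝ) / (Fintype.card X : ℝ))|)
      ≤ (1 / (2 * Real.sqrt (Fintype.card X))) *
          (2 : ℝ) ^ ((2 * Real.logb 2 (∑' y, Real.sqrt (D y))) / 2)
    ∧ (Finite Y →
        (1 / 2 : ℝ) * (∑' p : (X → Y) × Y,
            |(∏ x, D (p.1 x)) * D p.2 -
              (∏ x, D (p.1 x)) *
                (((Finset.univ.filter fun x => p.1 x = p.2).card : ℝ) /
                  (Fintype.card X : ℝ))|)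
          ≤ (1 / 2) * Real.sqrt ((Nat.card Y : ℝ) / (Fintype.card X : ℝ))) := by
  have hbound := tsum_abs_sub_card_fiber_div_le (X := X) hD0 hD1 hsq
  refine ⟨?_, fun _ => ?_⟩
  · rw [mul_div_cancel_left₀ _ two_ne_zero,
      Real.rpow_logb two_pos one_lt_two.ne' (one_pos.trans_le (one_le_tsum_sqrt hD0 hD1 hsq))]
    calc _ ≤ 1 / 2 * ((∑' y, √(D y)) / √(Fintype.card X)) := by gcongr
      _ = _ := by ring
  · calc _ ≤ 1 / 2 * ((∑' y, √(D y)) / √(Fintype.card X)) := by gcongr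
      _ ≤ 1 / 2 * (√(Nat.card Y) / √(Fintype.card X)) := by
        gcongr
        exact tsum_sqrt_le_sqrt_natCard hD0 hD1
      _ = _ := by rw [Real.sqrt_div (Nat.cast_nonneg _)]

theorem stmt2 {X Y : Type*} [Fintype X] [Nonempty X] [Countable Y]
    (D : Y → ℝ) (hD0 : ∀ y, 0 ≤ D y) (hD1 : HasSum D 1)
    (hsq : Summable fun y => Real.sqrt (D y)) :
    (1 / 2 : ℝ) * (∑' p : (X → Y) × Y,
        |(∏ x, D (p.1 x)) * D p.2 -
          (∏ x, D (p.1 x)) *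
            (((Finset.univ.filter fun x => p.1 x = p.2).card : ℝ) / (Fintype.card X : ℝ))|)
      ≤ (1 / (2 * Real.sqrt (Fintype.card X))) *
          (2 : ℝ) ^ ((2 * Real.logb 2 (∑' y, Real.sqrt (D y))) / 2)
    ∧ (Finite Y →
        (1 / 2 : ℝ) * (∑' p : (X → Y) × Y,
            |(∏ x, D (p.1 x)) * D p.2 -
              (∏ x, D (p.1 x)) *
                (((Finset.univ.filter fun x => p.1 x = p.2).card : ℝ) /
                  (Fintype.card X : ℝ))|)
          ≤ (1 / 2) * Real.sqrt ((Nat.card Y : ℝ) / (Fintype.card X : ℝ))) :=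
  stmt2_general D hD0 hD1 hsq
end

section
/- Let ℓ ≥ 1 and k be integers with 1 ≤ k ≤ 2^ℓ, and let p ∈ {1,…,ℓ}. Let S be chosen uniformly at random among all k-element subsets of {0,1}^ℓ, let x be chosen uniformly from S, and let b* be a uniformly random bit chosen independently. Then SD((S, x_p); (S, b*)) ≤ 1/(2√k), where x_p denotes the p-th bit of x. -/
open Finset

lemma exists_perm_pair {α : Type*} [DecidableEq α] {x y x' y' : α} (hxy : x ≠ y) (hxy' : x' ≠ y') :
    ∃ σ : Equiv.Perm α, σ x = x' ∧ σ y = y' := by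
  refine ⟨(Equiv.swap x x').trans (Equiv.swap ((Equiv.swap x x') y) y'), ?_, ?_⟩
  · have h1 : (Equiv.swap x x') y ≠ x' := by
      intro h
      apply hxy
      have := (Equiv.swap x x').injective (h.trans (Equiv.swap_apply_left x x').symm)
      exact this.symm
    simp only [Equiv.trans_apply, Equiv.swap_apply_left]
    exact Equiv.swap_apply_of_ne_of_ne (Ne.symm h1) hxy'
  · simp only [Equiv.trans_apply, Equiv.swap_apply_left]

lemma n2_const {α : Type*} [Fintype α] [DecidableEq α] (k : ℕ) {x y x' y' : α}
    (hxy : x ≠ y) (hxy' : x' ≠ y') :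
    ((((univ : Finset α)).powersetCard k).filter fun S => x ∈ S ∧ y ∈ S).card =
    ((((univ : Finset α)).powersetCard k).filter fun S => x' ∈ S ∧ y' ∈ S).card := by
  obtain ⟨σ, hx, hy⟩ := exists_perm_pair hxy hxy'
  apply Finset.card_bij' (fun S _ => S.image σ) (fun S _ => S.image σ.symm)
  · intro S _
    simp [Finset.image_image]
  · intro S _
    simp [Finset.image_image]
  · intro S hS
    simp only [mem_filter, Finset.mem_powersetCard_univ] at hS ⊢
    exact ⟨by rw [Finset.card_image_of_injective _ σ.injective]; exact hS.1, Finset.mem_image.2 ⟨x, hS.2.1, hx⟩, Finset.mem_image.2 ⟨y, hS.2.2, hy⟩⟩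
  · intro S hS
    simp only [mem_filter, Finset.mem_powersetCard_univ] at hS ⊢
    exact ⟨by rw [Finset.card_image_of_injective _ σ.symm.injective]; exact hS.1, Finset.mem_image.2 ⟨x', hS.2.1, by rw [← hx]; exact σ.symm_apply_apply x⟩, Finset.mem_image.2 ⟨y', hS.2.2, by rw [← hy]; exact σ.symm_apply_apply y⟩⟩

lemma sum_sq_le_main {α : Type*} [Fintype α] [DecidableEq α] {x₀ y₀ : α} (h₀ : x₀ ≠ y₀)
    (k : ℕ) (ε : α → ℝ) (hsq : ∀ x, ε x ^ 2 = 1) (hsum : ∑ x, ε x = 0)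
    (hn2 : ∀ x y : α, x ≠ y →
      ((((univ : Finset α)).powersetCard k).filter fun S => x ∈ S ∧ y ∈ S).card =
      ((((univ : Finset α)).powersetCard k).filter fun S => x₀ ∈ S ∧ y₀ ∈ S).card) :
    ∑ S ∈ (univ : Finset α).powersetCard k, (∑ x ∈ S, ε x) ^ 2
      ≤ (k : ℝ) * (((univ : Finset α).powersetCard k).card : ℝ) := by
  set P := (univ : Finset α).powersetCard k with hP
  set B : ℕ := (P.filter fun S => x₀ ∈ S ∧ y₀ ∈ S).card with hB
  have h1 : ∀ S ∈ P, (∑ x ∈ S, ε x) ^ 2 = (k : ℝ) + ∑ x ∈ S, ∑ y ∈ S.erase x, ε x * ε y := by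
    intro S hS
    have hcard : S.card = k := (Finset.mem_powersetCard_univ.1 hS)
    rw [sq, Finset.sum_mul_sum]
    have h2 : ∀ x ∈ S, ∑ y ∈ S, ε x * ε y = ε x ^ 2 + ∑ y ∈ S.erase x, ε x * ε y := by
      intro x hx
      rw [← Finset.add_sum_erase S (fun y => ε x * ε y) hx, sq]
    rw [Finset.sum_congr rfl h2, Finset.sum_add_distrib]
    congr 1
    rw [Finset.sum_congr rfl (fun x _ => hsq x), Finset.sum_const, hcard, nsmul_eq_mul, mul_one]
  have expand : ∑ S ∈ P, (∑ x ∈ S, ε x) ^ 2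
      = (P.card : ℝ) * (k : ℝ) + ∑ S ∈ P, ∑ x ∈ S, ∑ y ∈ S.erase x, ε x * ε y := by
    rw [Finset.sum_congr rfl h1, Finset.sum_add_distrib, Finset.sum_const, nsmul_eq_mul]
  -- rewrite T as sum over pairs
  have hTrw : ∑ S ∈ P, ∑ x ∈ S, ∑ y ∈ S.erase x, ε x * ε y
      = ∑ x, ∑ y ∈ univ.erase x, (ε x * ε y) *
          ((P.filter fun S => x ∈ S ∧ y ∈ S).card : ℝ) := by
    have step1 : ∀ S ∈ P, ∑ x ∈ S, ∑ y ∈ S.erase x, ε x * ε y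
        = ∑ x, ∑ y ∈ univ.erase x, (if x ∈ S ∧ y ∈ S then ε x * ε y else 0) := by
      intro S _
      rw [eq_comm]
      have inner : ∀ x : α, ∑ y ∈ univ.erase x, (if x ∈ S ∧ y ∈ S then ε x * ε y else 0)
          = if x ∈ S then ∑ y ∈ S.erase x, ε x * ε y else 0 := by
        intro x
        by_cases hx : x ∈ S
        · simp only [hx, true_and, if_true]
          rw [Finset.sum_ite_mem]
          congr 1
          ext y
          simp [and_comm]
        · simp [hx]
      rw [Finset.sum_congr rfl fun x _ => inner x, Finset.sum_ite_mem, Finset.univ_inter]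
    rw [Finset.sum_congr rfl step1, Finset.sum_comm]
    refine Finset.sum_congr rfl fun x _ => ?_
    rw [Finset.sum_comm]
    refine Finset.sum_congr rfl fun y _ => ?_
    rw [Finset.sum_ite, Finset.sum_const, Finset.sum_const_zero, add_zero, nsmul_eq_mul, mul_comm]
  have hT : ∑ S ∈ P, ∑ x ∈ S, ∑ y ∈ S.erase x, ε x * ε y ≤ 0 := by
    rw [hTrw]
    have : ∀ x : α, ∑ y ∈ univ.erase x, (ε x * ε y) *
        ((P.filter fun S => x ∈ S ∧ y ∈ S).card : ℝ) = -(B : ℝ) * (ε x ^ 2) := by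
      intro x
      have : ∀ y ∈ univ.erase x, (ε x * ε y) *
          ((P.filter fun S => x ∈ S ∧ y ∈ S).card : ℝ) = (B : ℝ) * (ε x * ε y) := by
        intro y hy
        rw [hn2 x y (Finset.ne_of_mem_erase hy).symm]
        ring
      rw [Finset.sum_congr rfl this, ← Finset.mul_sum, ← Finset.mul_sum,
        Finset.sum_erase_eq_sub (Finset.mem_univ x), hsum]
      ring
    rw [Finset.sum_congr rfl fun x _ => this x, ← Finset.mul_sum,
      Finset.sum_congr rfl fun x _ => hsq x, Finset.sum_const, nsmul_eq_mul, mul_one]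
    have : (0:ℝ) ≤ (B : ℝ) * (Fintype.card α : ℝ) := by positivity
    nlinarith
  rw [expand]
  nlinarith [hT]

theorem stmt3 (ℓ k : ℕ) (hℓ : 1 ≤ ℓ) (hk1 : 1 ≤ k) (hk2 : k ≤ 2 ^ ℓ) (p : Fin ℓ) :
    (1 / 2 : ℝ) * ∑ S ∈ (Finset.univ : Finset (Fin ℓ → Bool)).powersetCard k, ∑ b : Bool,
        |(1 / (((Finset.univ : Finset (Fin ℓ → Bool)).powersetCard k).card : ℝ)) *
            (((S.filter fun x => x p = b).card : ℝ) / (k : ℝ)) -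
          (1 / (((Finset.univ : Finset (Fin ℓ → Bool)).powersetCard k).card : ℝ)) * (1 / 2)|
      ≤ 1 / (2 * Real.sqrt k) := by
  classical
  set P := (Finset.univ : Finset (Fin ℓ → Bool)).powersetCard k with hPdef
  set C0 : ℝ := (P.card : ℝ) with hC0def
  have hcardα : Fintype.card (Fin ℓ → Bool) = 2 ^ ℓ := by simp
  have hC0pos : 0 < C0 := by
    have : 0 < P.card := by
      rw [hPdef, Finset.card_powersetCard, Finset.card_univ, hcardα]
      exact Nat.choose_pos hk2
    rw [hC0def]; exact_mod_cast this
  have hkpos : (0:ℝ) < k := by exact_mod_cast hk1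
  set ε : (Fin ℓ → Bool) → ℝ := fun x => if x p = true then 1 else -1 with hεdef
  clear_value P C0 ε
  have hsq : ∀ x, ε x ^ 2 = 1 := by
    intro x; by_cases h : x p = true <;> simp [hεdef, h]
  -- sum of ε over all of univ is zero
  have hsum : ∑ x, ε x = 0 := by
    have hinv : Function.Involutive (fun x : Fin ℓ → Bool => Function.update x p (!(x p))) := by
      intro x
      ext q
      by_cases h : q = p
      · subst h; simp
      · simp [Function.update_of_ne h]
    set e := hinv.toPerm with hedef
    have h1 : ∑ x, ε (e x) = ∑ x, ε x := Equiv.sum_comp e ε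
    have h2 : ∀ x, ε (e x) = - ε x := by
      intro x
      have : (e x) p = !(x p) := by simp [hedef, Function.Involutive.toPerm]
      by_cases h : x p = true <;> simp [hεdef, this, h]
    rw [Finset.sum_congr rfl fun x _ => h2 x, Finset.sum_neg_distrib] at h1
    linarith
  have h₀ : (fun _ : Fin ℓ => false) ≠ (fun _ : Fin ℓ => true) := by
    intro h; exact absurd (congrFun h p) (by simp)
  have hn2 : ∀ x y : Fin ℓ → Bool, x ≠ y →
      ((((univ : Finset (Fin ℓ → Bool)))).powersetCard k |>.filter fun S => x ∈ S ∧ y ∈ S).card =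
      ((((univ : Finset (Fin ℓ → Bool)))).powersetCard k |>.filter
        fun S => (fun _ : Fin ℓ => false) ∈ S ∧ (fun _ : Fin ℓ => true) ∈ S).card :=
    fun x y hxy => n2_const k hxy h₀
  have hDsq : ∑ S ∈ P, (∑ x ∈ S, ε x) ^ 2 ≤ (k : ℝ) * C0 := by
    rw [hC0def, hPdef]
    exact sum_sq_le_main h₀ k ε hsq hsum hn2
  have hkey : ∀ S ∈ P, (∑ b : Bool,
      |1 / C0 * (((S.filter fun x => x p = b).card : ℝ) / (k : ℝ)) - 1 / C0 * (1/2)|)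
      = 1 / (C0 * k) * |∑ x ∈ S, ε x| := by
    intro S hS
    rw [hPdef] at hS
    have hScard : S.card = k := Finset.mem_powersetCard_univ.1 hS
    set a : ℝ := ((S.filter fun x => x p = true).card : ℝ) with hadef
    set b : ℝ := ((S.filter fun x => x p = false).card : ℝ) with hbdef
    have hfe : S.filter (fun x => ¬ (x p = true)) = S.filter (fun x => x p = false) := by
      apply Finset.filter_congr; intro x _; simp
    have hab : a + b = (k : ℝ) := by
      have h := Finset.card_filter_add_card_filter_not
        (s := S) (p := fun x => x p = true)
      rw [hfe, hScard] at h
      rw [hadef, hbdef]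
      exact_mod_cast h
    have hD : ∑ x ∈ S, ε x = a - b := by
      rw [hεdef]
      rw [Finset.sum_ite, Finset.sum_const, Finset.sum_const, hfe, hadef, hbdef]
      simp [sub_eq_add_neg]
    have hC0ne : C0 ≠ 0 := ne_of_gt hC0pos
    have hkne : (k:ℝ) ≠ 0 := ne_of_gt hkpos
    have hbeq : b = (k:ℝ) - a := by linarith
    have e1 : 1 / C0 * (a / k) - 1 / C0 * (1/2) = (a - b) / (2 * k * C0) := by
      rw [hbeq]; field_simp; ring
    have e2 : 1 / C0 * (b / k) - 1 / C0 * (1/2) = -((a - b) / (2 * k * C0)) := by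
      rw [hbeq]; field_simp; ring
    rw [Fintype.sum_bool, e1, e2, abs_neg, hD]
    rw [abs_div, abs_of_pos (by nlinarith [hC0pos, hkpos] : (0:ℝ) < 2 * k * C0)]
    field_simp
    ring
  have hCS : (∑ S ∈ P, |∑ x ∈ S, ε x|) ^ 2 ≤ C0 * ((k : ℝ) * C0) := by
    have h1 := sq_sum_le_card_mul_sum_sq (s := P) (f := fun S => |∑ x ∈ S, ε x|)
    have h2 : ∑ S ∈ P, |∑ x ∈ S, ε x| ^ 2 = ∑ S ∈ P, (∑ x ∈ S, ε x) ^ 2 :=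
      Finset.sum_congr rfl fun S _ => sq_abs _
    calc (∑ S ∈ P, |∑ x ∈ S, ε x|) ^ 2 ≤ (P.card : ℝ) * ∑ S ∈ P, |∑ x ∈ S, ε x| ^ 2 := h1
      _ = C0 * ∑ S ∈ P, (∑ x ∈ S, ε x) ^ 2 := by rw [h2, hC0def]
      _ ≤ C0 * ((k : ℝ) * C0) := mul_le_mul_of_nonneg_left hDsq hC0pos.le
  have hsum_le : ∑ S ∈ P, |∑ x ∈ S, ε x| ≤ C0 * Real.sqrt k := by
    have hnn : (0:ℝ) ≤ ∑ S ∈ P, |∑ x ∈ S, ε x| :=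
      Finset.sum_nonneg fun _ _ => abs_nonneg _
    have hsq2 : (C0 * Real.sqrt k) ^ 2 = C0 * ((k : ℝ) * C0) := by
      rw [mul_pow, Real.sq_sqrt hkpos.le]; ring
    exact (pow_le_pow_iff_left₀ hnn (mul_nonneg hC0pos.le (Real.sqrt_nonneg _)) two_ne_zero).1 (by rw [hsq2]; exact hCS)
  have hmain : (1/2 : ℝ) * ∑ S ∈ P, (∑ b : Bool,
      |1 / C0 * (((S.filter fun x => x p = b).card : ℝ) / (k : ℝ)) - 1 / C0 * (1/2)|)
      ≤ 1 / (2 * Real.sqrt k) := by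
    rw [Finset.sum_congr rfl hkey, ← Finset.mul_sum]
    have hsqrtpos : 0 < Real.sqrt (k:ℝ) := Real.sqrt_pos.2 hkpos
    have hms : Real.sqrt (k:ℝ) * Real.sqrt (k:ℝ) = (k:ℝ) := Real.mul_self_sqrt hkpos.le
    calc (1/2 : ℝ) * (1 / (C0 * k) * ∑ S ∈ P, |∑ x ∈ S, ε x|)
        ≤ (1/2 : ℝ) * (1 / (C0 * k) * (C0 * Real.sqrt k)) := by
          have h0 : (0:ℝ) ≤ 1 / (C0 * k) :=
            div_nonneg zero_le_one (le_of_lt (mul_pos hC0pos hkpos))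
          nlinarith [hsum_le, h0]
      _ = 1 / (2 * Real.sqrt k) := by
          have hC0ne : C0 ≠ 0 := ne_of_gt hC0pos
          have hkne : (k:ℝ) ≠ 0 := ne_of_gt hkpos
          have hsne : Real.sqrt (k:ℝ) ≠ 0 := ne_of_gt hsqrtpos
          field_simp
          nlinarith [hms]
  exact hmain
end

section
/- Let C and R be finite nonempty sets and k ≥ 1 an integer with k ≤ |C|·|R|. Let S be chosen uniformly at random among all k-element subsets of C × R. Let c′ be uniform in C and let r′ be uniform in S_{|c′} := {r ∈ R : (c′, r) ∈ S}, where r′ := ⊥ (an element not in R) if S_{|c′} is empty. Independently, let (c″, r″) be uniform in S. Then SD((S, c′, r′); (S, c″, r″)) ≤ 2k²/(|C|·|R|) + √|C|/(2√k). -/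
/-!
Given the column `c`, the second coordinate is uniform on the row `S_{|c}` in both experiments
(and `r′ = ⊥` exactly when that row is empty), so the statistical distance is that of the column
marginals, `(1/2) E_S Σ_c |1/|C| - a_c(S)/k|` with `a_c(S) = |S_{|c}|`. For fixed `c`, `a_c` is
hypergeometric: double counting the subsets `T ⊆ S ∩ ({c} × R)` of size 1 and 2 gives its first
two factorial moments, hence mean `k/|C|` and variance at most `k/|C|`. Cauchy–Schwarz turns this
into `E_S |a_c/k - 1/|C|| ≤ 1/√(|C| k)`, and the `|C|` columns add up to `√|C| / (2√k)`.
-/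

open Finset
open scoped Classical

namespace Finset

variable {α : Type*} [DecidableEq α]

theorem sum_choose_card_inter_mul_choose (s t : Finset α) (hts : t ⊆ s) (j k : ℕ) :
    (∑ S ∈ s.powersetCard k, (#(S ∩ t)).choose j) * (#s).choose j
      = (#t).choose j * k.choose j * (#s).choose k := by
  rcases lt_or_ge k j with hkj | hjk
  · rw [Nat.choose_eq_zero_of_lt hkj, mul_zero, zero_mul, sum_eq_zero, zero_mul]
    intro S hS
    exact Nat.choose_eq_zero_of_lt <|
      (card_le_card inter_subset_left).trans_lt ((mem_powersetCard.1 hS).2 ▸ hkj)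
  have hcount : ∑ S ∈ s.powersetCard k, (#(S ∩ t)).choose j
      = ∑ T ∈ t.powersetCard j, #((s.powersetCard k).filter (T ⊆ ·)) := by
    have h := sum_card_bipartiteAbove_eq_sum_card_bipartiteBelow
      (s := s.powersetCard k) (t := t.powersetCard j) (fun S T => T ⊆ S)
    simp only [bipartiteAbove, bipartiteBelow] at h
    convert h using 2 with S
    rw [← card_powersetCard]
    congr 1
    ext T
    simp only [mem_powersetCard, subset_inter_iff, mem_filter]
    tauto
  rw [hcount, sum_congr rfl fun T hT => card_filter_powersetCard_subset T s k
      ((mem_powersetCard.1 hT).1.trans hts) ((mem_powersetCard.1 hT).2.symm ▸ hjk)]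
  rw [sum_congr rfl fun T hT => by rw [(mem_powersetCard.1 hT).2], sum_const, card_powersetCard,
    smul_eq_mul, mul_assoc, mul_assoc, mul_comm ((#s - j).choose _), ← Nat.choose_mul hjk,
    mul_comm (k.choose j)]

theorem sum_card_inter_powersetCard (s t : Finset α) (hts : t ⊆ s) (k : ℕ) :
    ∑ S ∈ s.powersetCard k, (#(S ∩ t) : ℝ) = (#s).choose k * (k * #t / #s) := by
  rcases (#s).eq_zero_or_pos with hs | hs
  · obtain rfl : s = ∅ := card_eq_zero.1 hs
    simp [subset_empty.1 hts]
  have h := congrArg (Nat.cast : ℕ → ℝ) (sum_choose_card_inter_mul_choose s t hts 1 k)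
  simp only [Nat.choose_one_right, Nat.cast_mul, Nat.cast_sum] at h
  rw [mul_div_assoc', eq_div_iff (by positivity), h]
  ring

theorem sum_card_inter_mul_sub_one_le (s t : Finset α) (hts : t ⊆ s) (k : ℕ) :
    ∑ S ∈ s.powersetCard k, (#(S ∩ t) : ℝ) * (#(S ∩ t) - 1)
      ≤ (#s).choose k * (k * #t / #s) ^ 2 := by
  rcases le_or_gt k 1 with hk | hk
  · refine (sum_nonpos fun S hS => ?_).trans (by positivity)
    have : #(S ∩ t) ≤ 1 := (card_le_card inter_subset_left).trans ((mem_powersetCard.1 hS).2 ▸ hk)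
    have : (#(S ∩ t) : ℝ) ≤ 1 := by exact_mod_cast this
    nlinarith [(#(S ∩ t)).cast_nonneg (α := ℝ)]
  rcases lt_or_ge #s k with hks | hks
  · simp [powersetCard_eq_empty.2 hks, Nat.choose_eq_zero_of_lt hks]
  have h := congrArg (Nat.cast : ℕ → ℝ) (sum_choose_card_inter_mul_choose s t hts 2 k)
  simp only [Nat.cast_choose_two, Nat.cast_mul, Nat.cast_sum, ← sum_div] at h
  have hs : (2 : ℝ) ≤ #s := by exact_mod_cast hk.trans_le hks
  set Y := ∑ S ∈ s.powersetCard k, (#(S ∩ t) : ℝ) * (#(S ∩ t) - 1)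
  have hY : Y * (#s * (#s - 1)) = #t * (#t - 1) * (k * (k - 1)) * (#s).choose k := by
    linear_combination 4 * h
  have hkR : (2 : ℝ) ≤ k := by exact_mod_cast hk
  have hksR : (k : ℝ) ≤ #s := by exact_mod_cast hks
  -- the right side minus the left side is `#t * (#s - k) + #s * (k - 1)`
  have key : ((#t : ℝ) - 1) * (k - 1) * #s ≤ k * #t * (#s - 1) := by
    nlinarith [mul_nonneg (#t).cast_nonneg (sub_nonneg.2 hksR),
      mul_nonneg (#s).cast_nonneg (by linarith : (0 : ℝ) ≤ k - 1)]
  have hY' : Y * #s ^ 2 * (#s - 1) ≤ (#s).choose k * (k * #t) ^ 2 * (#s - 1) :=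
    calc Y * #s ^ 2 * (#s - 1) = #t * k * (#s).choose k * ((#t - 1) * (k - 1) * #s) := by
          linear_combination #s * hY
      _ ≤ #t * k * (#s).choose k * (k * #t * (#s - 1)) := by gcongr
      _ = (#s).choose k * (k * #t) ^ 2 * (#s - 1) := by ring
  rw [div_pow, mul_div_assoc', le_div_iff₀ (by positivity)]
  exact le_of_mul_le_mul_right hY' (by linarith)

theorem sum_sq_card_inter_sub_le (s t : Finset α) (hts : t ⊆ s) (k : ℕ) :
    ∑ S ∈ s.powersetCard k, ((#(S ∩ t) : ℝ) - k * #t / #s) ^ 2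
      ≤ (#s).choose k * (k * #t / #s) := by
  set p : ℝ := k * #t / #s
  have hexpand : ∀ S : Finset α, ((#(S ∩ t) : ℝ) - p) ^ 2
      = #(S ∩ t) * (#(S ∩ t) - 1) + (1 - 2 * p) * #(S ∩ t) + p ^ 2 := fun S => by ring
  simp only [hexpand, sum_add_distrib, ← mul_sum, sum_const, card_powersetCard, nsmul_eq_mul,
    sum_card_inter_powersetCard s t hts k]
  linarith [sum_card_inter_mul_sub_one_le s t hts k]

theorem sum_abs_card_inter_sub_le (s t : Finset α) (hts : t ⊆ s) (k : ℕ) :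
    ∑ S ∈ s.powersetCard k, |(#(S ∩ t) : ℝ) - k * #t / #s|
      ≤ (#s).choose k * √(k * #t / #s) := by
  have hCS := sq_sum_le_card_mul_sum_sq (s := s.powersetCard k)
    (f := fun S => |(#(S ∩ t) : ℝ) - k * #t / #s|)
  simp only [sq_abs, card_powersetCard] at hCS
  calc ∑ S ∈ s.powersetCard k, |(#(S ∩ t) : ℝ) - k * #t / #s|
      ≤ √((#s).choose k * ((#s).choose k * (k * #t / #s))) :=
        Real.le_sqrt_of_sq_le (hCS.trans (by gcongr; exact sum_sq_card_inter_sub_le s t hts k))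
    _ = (#s).choose k * √(k * #t / #s) := by
        rw [← mul_assoc, Real.sqrt_mul (by positivity), Real.sqrt_mul_self (by positivity)]

end Finset

section Grid

variable {C R : Type*} [Fintype R]

theorem card_filter_prodMk_mem (S : Finset (C × R)) (c : C) :
    #{r | (c, r) ∈ S} = #(S.filter fun q => q.1 = c) := by
  refine card_nbij' (c, ·) Prod.snd (fun r hr => ?_) (fun ⟨c', r⟩ hq => ?_) (fun _ _ => rfl)
    (fun ⟨c', r⟩ hq => ?_) <;> aesop

theorem sum_option_abs_sub_eq_abs_sub (S : Finset (C × R)) (c : C) (u v w : ℝ) :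
    ∑ r : Option R, |u * r.elim (if (S.filter fun q => q.1 = c) = ∅ then (1 : ℝ) else 0)
        (fun r' => if (c, r') ∈ S then 1 / (#(S.filter fun q => q.1 = c) : ℝ) else 0) -
      v * r.elim (0 : ℝ) (fun r' => if (c, r') ∈ S then w else 0)|
      = |u - v * #(S.filter fun q => q.1 = c) * w| := by
  have hsome : ∀ r : R, |u * (if (c, r) ∈ S then 1 / (#(S.filter fun q => q.1 = c) : ℝ) else 0) -
      v * (if (c, r) ∈ S then w else 0)|
        = if (c, r) ∈ S then |u / #(S.filter fun q => q.1 = c) - v * w| else 0 := by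
    intro r
    split_ifs <;> simp [div_eq_mul_inv]
  simp only [Fintype.sum_option, Option.elim, hsome]
  rw [← sum_filter, sum_const, card_filter_prodMk_mem, nsmul_eq_mul]
  generalize S.filter (fun q => q.1 = c) = row
  rcases eq_empty_or_nonempty row with rfl | h
  · simp
  · have hpos : (0 : ℝ) < #row := by exact_mod_cast h.card_pos
    rw [if_neg h.ne_empty, mul_zero, mul_zero, sub_zero, abs_zero, zero_add,
      ← abs_of_pos hpos, ← abs_mul, abs_of_pos hpos]
    congr 1
    field_simp

theorem one_div_card_powersetCard_mul_sum_abs_sub_le [Fintype C] [Nonempty R] (c : C) {k : ℕ}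
    (hk : 0 < k) :
    1 / (#((univ : Finset (C × R)).powersetCard k) : ℝ) *
        ∑ S ∈ (univ : Finset (C × R)).powersetCard k,
          |1 / (Fintype.card C : ℝ) - #(S.filter fun q => q.1 = c) / k|
      ≤ 1 / √(Fintype.card C * k) := by
  set row := (univ : Finset (C × R)).filter fun q => q.1 = c
  have hrow : #row = Fintype.card R := by
    rw [← card_filter_prodMk_mem]; simp
  have hfilter : ∀ S : Finset (C × R), S.filter (fun q => q.1 = c) = S ∩ row := fun S => by
    ext; simp [row]
  have hn : (0 : ℝ) < Fintype.card C := by exact_mod_cast Fintype.card_pos_iff.2 ⟨c⟩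
  have hm : (0 : ℝ) < Fintype.card R := by exact_mod_cast Fintype.card_pos
  have hkR : (0 : ℝ) < k := by exact_mod_cast hk
  have hdev := sum_abs_card_inter_sub_le univ row (subset_univ _) k
  rw [← card_powersetCard, hrow, card_univ, Fintype.card_prod, Nat.cast_mul,
    mul_div_mul_right _ _ hm.ne'] at hdev
  have hterm : ∀ S : Finset (C × R), |1 / (Fintype.card C : ℝ) - #(S.filter fun q => q.1 = c) / k|
      = |(#(S ∩ row) : ℝ) - k / Fintype.card C| / k := fun S => by
    rw [hfilter, ← abs_of_pos hkR, ← abs_div, abs_of_pos hkR, abs_sub_comm]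
    congr 1
    field_simp
  rw [sum_congr rfl fun S _ => hterm S, ← sum_div]
  calc 1 / (#((univ : Finset (C × R)).powersetCard k) : ℝ) * ((∑ S ∈ univ.powersetCard k,
          |(#(S ∩ row) : ℝ) - k / Fintype.card C|) / k)
      ≤ 1 / (#((univ : Finset (C × R)).powersetCard k) : ℝ)
          * (#((univ : Finset (C × R)).powersetCard k) * √(k / Fintype.card C) / k) :=
        mul_le_mul_of_nonneg_left (div_le_div_of_nonneg_right hdev hkR.le)
          (one_div_nonneg.2 (Nat.cast_nonneg _))
    _ ≤ √(k / Fintype.card C) / k := by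
        rw [mul_div_assoc, ← mul_assoc]
        exact mul_le_of_le_one_left (by positivity) (by rw [one_div]; exact inv_mul_le_one)
    _ = 1 / √(Fintype.card C * k) := by
        rw [Real.sqrt_div' _ hn.le, Real.sqrt_mul hn.le]
        rw [div_div, div_eq_div_iff (by positivity) (by positivity)]
        linear_combination √(Fintype.card C : ℝ) * Real.mul_self_sqrt hkR.le

end Grid

theorem stmt4_general {C R : Type*} [Fintype C] [Fintype R] [Nonempty R]
    (k : ℕ) (hk1 : 1 ≤ k) :
    (1 / 2 : ℝ) * ∑ S ∈ (Finset.univ : Finset (C × R)).powersetCard k, ∑ c : C,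
        ∑ r : Option R,
        |(1 / (((Finset.univ : Finset (C × R)).powersetCard k).card : ℝ)) *
              (1 / (Fintype.card C : ℝ)) *
              (r.elim (if (S.filter fun q => q.1 = c) = ∅ then (1 : ℝ) else 0)
                (fun r' => if (c, r') ∈ S then
                    1 / (((S.filter fun q => q.1 = c).card : ℝ)) else 0)) -
            (1 / (((Finset.univ : Finset (C × R)).powersetCard k).card : ℝ)) *
              (r.elim (0 : ℝ) (fun r' => if (c, r') ∈ S then 1 / (k : ℝ) else 0))|
      ≤ 2 * (k : ℝ) ^ 2 / ((Fintype.card C : ℝ) * (Fintype.card R : ℝ)) +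
          Real.sqrt (Fintype.card C) / (2 * Real.sqrt k) := by
  set B : ℝ := (#((univ : Finset (C × R)).powersetCard k) : ℝ)
  have hscale : ∀ x : ℝ, |1 / B * (1 / Fintype.card C) - 1 / B * x * (1 / k)|
      = 1 / B * |1 / Fintype.card C - x / k| := fun x => by
    rw [← mul_one_div x, mul_assoc (1 / B), ← mul_sub, abs_mul,
      abs_of_nonneg (one_div_nonneg.2 (Nat.cast_nonneg _))]
  simp only [sum_option_abs_sub_eq_abs_sub, hscale]
  rw [sum_comm, sum_congr rfl fun c _ => (mul_sum _ _ _).symm]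
  calc 1 / 2 * ∑ c : C, 1 / B * ∑ S ∈ (univ : Finset (C × R)).powersetCard k,
          |1 / (Fintype.card C : ℝ) - #(S.filter fun q => q.1 = c) / k|
      ≤ 1 / 2 * ∑ _c : C, 1 / √(Fintype.card C * k) := by
        gcongr with c
        exact one_div_card_powersetCard_mul_sum_abs_sub_le c hk1
    _ = √(Fintype.card C) / (2 * √k) := by
        rw [sum_const, card_univ, nsmul_eq_mul, Real.sqrt_mul (Nat.cast_nonneg _), mul_one_div,
          ← div_div, Real.div_sqrt]
        ring
    _ ≤ 2 * (k : ℝ) ^ 2 / ((Fintype.card C : ℝ) * (Fintype.card R : ℝ)) +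
          √(Fintype.card C) / (2 * √k) := le_add_of_nonneg_left (by positivity)

theorem stmt4 {C R : Type*} [Fintype C] [Fintype R] [Nonempty C] [Nonempty R]
    (k : ℕ) (hk1 : 1 ≤ k) (hk2 : k ≤ Fintype.card C * Fintype.card R) :
    (1 / 2 : ℝ) * ∑ S ∈ (Finset.univ : Finset (C × R)).powersetCard k, ∑ c : C,
        ∑ r : Option R,
        |(1 / (((Finset.univ : Finset (C × R)).powersetCard k).card : ℝ)) *
              (1 / (Fintype.card C : ℝ)) *
              (r.elim (if (S.filter fun q => q.1 = c) = ∅ then (1 : ℝ) else 0)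
                (fun r' => if (c, r') ∈ S then
                    1 / (((S.filter fun q => q.1 = c).card : ℝ)) else 0)) -
            (1 / (((Finset.univ : Finset (C × R)).powersetCard k).card : ℝ)) *
              (r.elim (0 : ℝ) (fun r' => if (c, r') ∈ S then 1 / (k : ℝ) else 0))|
      ≤ 2 * (k : ℝ) ^ 2 / ((Fintype.card C : ℝ) * (Fintype.card R : ℝ)) +
          Real.sqrt (Fintype.card C) / (2 * Real.sqrt k) :=
  stmt4_general k hk1
end

section
/- Let Z and A be finite nonempty sets, γ ∈ [0,1] a real number, and q ≥ 0 an integer. Let H := ℂ^{A × Z × {0,1}}. For each function f : Z → {0,1}, let O_f be the unitary on H determined on standard basis vectors by O_f |a, z, v⟩ = |a, z, v ⊕ f(z)⟩. Let F : Z → {0,1} be a random function whose values F(z) are independent, each equal to 1 with probability γ, and let N : Z → {0,1} be the constant-zero function. Then for every unitary U on H, every unit vector Ψ₀ ∈ H, and every orthogonal projection Π on H: | E_F[ ‖Π (U O_F)^q Ψ₀‖² ] − ‖Π (U O_N)^q Ψ₀‖² | ≤ 2q√γ. -/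
/-- The oracle unitary `O_f` determined on standard basis vectors by
`O_f |a, z, v⟩ = |a, z, v ⊕ f(z)⟩`. -/
noncomputable def oracleOp {A Z : Type*} (f : Z → Bool)
    (Ψ : EuclideanSpace ℂ (A × Z × Bool)) : EuclideanSpace ℂ (A × Z × Bool) :=
  WithLp.toLp 2 (fun p : A × Z × Bool => Ψ (p.1, p.2.1, xor p.2.2 (f p.2.1)))

/-!
Hybrid argument. Write `V_f = U O_f`; since `O_N = 1`, `V_N = U`. Because every `V_f` is an
isometry, exchanging the oracle one query at a time gives
`‖V_f^q Ψ₀ - U^q Ψ₀‖ ≤ ∑_{j<q} ‖(O_f - 1) U^j Ψ₀‖`, and for an orthogonal projection the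
acceptance probabilities of two unit vectors differ by at most their distance.
Finally `O_f - 1` only sees the components `|a, z, v⟩` with `f z = 1`, on which it has norm
at most `2`, so `E_F ‖(O_F - 1) ψ‖² ≤ 4γ‖ψ‖²`, and Jensen gives `E_F ‖(O_F - 1) ψ‖ ≤ 2√γ ‖ψ‖`.
-/

open Finset

theorem LipschitzWith.dist_iterate_le_sum_dist {X : Type*} [PseudoMetricSpace X] {V W : X → X}
    (hV : LipschitzWith 1 V) (x : X) (k : ℕ) :
    dist (V^[k] x) (W^[k] x) ≤ ∑ j ∈ range k, dist (V (W^[j] x)) (W (W^[j] x)) := by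
  induction k with
  | zero => simp
  | succ k ih =>
    rw [Function.iterate_succ_apply', Function.iterate_succ_apply', sum_range_succ]
    calc dist (V (V^[k] x)) (W (W^[k] x))
        ≤ dist (V (V^[k] x)) (V (W^[k] x)) + dist (V (W^[k] x)) (W (W^[k] x)) :=
          dist_triangle _ _ _
      _ ≤ dist (V^[k] x) (W^[k] x) + dist (V (W^[k] x)) (W (W^[k] x)) := by
          gcongr; simpa using hV.dist_le_mul (V^[k] x) (W^[k] x)
      _ ≤ _ := by gcongr

/- With `X = a - b`, `Y = a' - b'`, `D = a² - b²`: `X (a + b) = -Y (a' + b') = D` and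
`(a + b)² + (a' + b')² ≤ 4`, so `4 (X² + Y²) ≥ 2 D² + (a' + b')² X² + (a + b)² Y² ≥ 4 D²`. -/
theorem sq_sub_sq_sq_le_of_sq_add_sq_eq_one {a a' b b' : ℝ} (ha : a ^ 2 + a' ^ 2 = 1)
    (hb : b ^ 2 + b' ^ 2 = 1) : (a ^ 2 - b ^ 2) ^ 2 ≤ (a - b) ^ 2 + (a' - b') ^ 2 := by
  have hsum : (a + b) ^ 2 + (a' + b') ^ 2 ≤ 4 := by
    nlinarith [sq_nonneg (a - b), sq_nonneg (a' - b')]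
  have hX : (a - b) * (a + b) = a ^ 2 - b ^ 2 := by ring
  have hY : (a' - b') * (a' + b') = -(a ^ 2 - b ^ 2) := by linear_combination ha - hb
  nlinarith [sq_nonneg ((a' + b') * (a - b) + (a + b) * (a' - b')),
    mul_le_mul_of_nonneg_right hsum (add_nonneg (sq_nonneg (a - b)) (sq_nonneg (a' - b')))]

section InnerProductSpace

variable {𝕜 E : Type*} [RCLike 𝕜] [NormedAddCommGroup E] [InnerProductSpace 𝕜 E]

theorem LinearIsometryEquiv.norm_iterate_apply (T : E ≃ₗᵢ[𝕜] E) (n : ℕ) (x : E) :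
    ‖T^[n] x‖ = ‖x‖ :=
  Function.Iterate.rec (fun y => ‖y‖ = ‖x‖) rfl (fun y hy => (T.norm_map y).trans hy) n

theorem abs_norm_starProjection_sq_sub_le (K : Submodule 𝕜 E) [K.HasOrthogonalProjection]
    {u v : E} (hu : ‖u‖ = 1) (hv : ‖v‖ = 1) :
    |‖K.starProjection u‖ ^ 2 - ‖K.starProjection v‖ ^ 2| ≤ ‖u - v‖ := by
  have hu' := K.norm_sq_eq_add_norm_sq_starProjection u
  have hv' := K.norm_sq_eq_add_norm_sq_starProjection v
  have huv := K.norm_sq_eq_add_norm_sq_starProjection (u - v)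
  rw [hu, one_pow] at hu'
  rw [hv, one_pow] at hv'
  rw [map_sub, map_sub] at huv
  have hdistK := abs_norm_sub_norm_le (K.starProjection u) (K.starProjection v)
  have hdistOrth := abs_norm_sub_norm_le (Kᗮ.starProjection u) (Kᗮ.starProjection v)
  refine abs_le_of_sq_le_sq ?_ (norm_nonneg _)
  calc _ ≤ (‖K.starProjection u‖ - ‖K.starProjection v‖) ^ 2
        + (‖Kᗮ.starProjection u‖ - ‖Kᗮ.starProjection v‖) ^ 2 :=
        sq_sub_sq_sq_le_of_sq_add_sq_eq_one hu'.symm hv'.symm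
    _ ≤ _ := by
        rw [huv, ← sq_abs (‖K.starProjection u‖ - _), ← sq_abs (‖Kᗮ.starProjection u‖ - _)]
        gcongr

theorem LinearMap.IsSymmetricProjection.abs_norm_apply_sq_sub_le {P : E →ₗ[𝕜] E}
    (hP : P.IsSymmetricProjection) {u v : E} (hu : ‖u‖ = 1) (hv : ‖v‖ = 1) :
    |‖P u‖ ^ 2 - ‖P v‖ ^ 2| ≤ ‖u - v‖ := by
  obtain ⟨_, hPK⟩ := P.isSymmetricProjection_iff_eq_coe_starProjection_range.1 hP
  rw [hPK]
  exact abs_norm_starProjection_sq_sub_le _ hu hv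

end InnerProductSpace

theorem abs_sum_mul_sub_le {ι : Type*} (s : Finset ι) {w x : ι → ℝ} (hw₀ : ∀ i ∈ s, 0 ≤ w i)
    (hw₁ : ∑ i ∈ s, w i = 1) (c : ℝ) :
    |∑ i ∈ s, w i * x i - c| ≤ ∑ i ∈ s, w i * |x i - c| := by
  have : ∑ i ∈ s, w i * x i - c = ∑ i ∈ s, w i * (x i - c) := by
    simp only [mul_sub, sum_sub_distrib, ← sum_mul, hw₁, one_mul]
  rw [this]
  refine (abs_sum_le_sum_abs _ _).trans (sum_le_sum fun i hi => ?_)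
  rw [abs_mul, abs_of_nonneg (hw₀ i hi)]

section BernoulliWeight

variable {Z : Type*} [Fintype Z]

def bernoulliWeight (γ : ℝ) (f : Z → Bool) : ℝ := ∏ z, if f z then γ else 1 - γ

theorem bernoulliWeight_nonneg {γ : ℝ} (hγ₀ : 0 ≤ γ) (hγ₁ : γ ≤ 1) (f : Z → Bool) :
    0 ≤ bernoulliWeight γ f :=
  prod_nonneg fun z _ => by split_ifs <;> linarith

variable [DecidableEq Z]

theorem sum_bernoulliWeight (γ : ℝ) : ∑ f : Z → Bool, bernoulliWeight γ f = 1 := by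
  simp only [bernoulliWeight]
  rw [← Fintype.prod_sum (fun (_ : Z) (b : Bool) => if b then γ else 1 - γ)]
  simp

theorem sum_bernoulliWeight_mul_ite (γ : ℝ) (z₀ : Z) (c : ℝ) :
    ∑ f : Z → Bool, bernoulliWeight γ f * (if f z₀ then c else 0) = γ * c := by
  have factor : ∀ f : Z → Bool, bernoulliWeight γ f * (if f z₀ then c else 0) =
      ∏ z, (if f z then γ else 1 - γ) * (if z = z₀ then (if f z then c else 0) else 1) := by
    intro f
    rw [prod_mul_distrib, prod_ite_eq' univ z₀ (fun z => if f z then c else 0)]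
    simp [bernoulliWeight]
  simp_rw [factor]
  rw [← Fintype.prod_sum (fun (z : Z) (b : Bool) =>
    (if b then γ else 1 - γ) * (if z = z₀ then (if b then c else 0) else 1))]
  rw [Fintype.prod_eq_single z₀ fun z hz => by simp [hz]]
  simp

end BernoulliWeight

section Oracle

variable {A Z : Type*}

def oracleEquiv (f : Z → Bool) : Equiv.Perm (A × Z × Bool) :=
  Function.Involutive.toPerm (fun p => (p.1, p.2.1, xor p.2.2 (f p.2.1))) fun p => by simp

theorem oracleOp_const_false : oracleOp (A := A) (fun _ : Z => false) = id := by
  ext Ψ p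
  simp [oracleOp]

noncomputable def markedPart (f : Z → Bool) (Ψ : EuclideanSpace ℂ (A × Z × Bool)) :
    EuclideanSpace ℂ (A × Z × Bool) :=
  WithLp.toLp 2 fun p => if f p.2.1 then Ψ p else 0

theorem oracleOp_sub_self (f : Z → Bool) (Ψ : EuclideanSpace ℂ (A × Z × Bool)) :
    oracleOp f Ψ - Ψ = oracleOp f (markedPart f Ψ) - markedPart f Ψ := by
  ext ⟨a, z, v⟩
  cases h : f z <;> simp [oracleOp, markedPart, h]

variable [Fintype A] [Fintype Z]

noncomputable def oracle (f : Z → Bool) :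
    EuclideanSpace ℂ (A × Z × Bool) ≃ₗᵢ[ℂ] EuclideanSpace ℂ (A × Z × Bool) :=
  LinearIsometryEquiv.piLpCongrLeft 2 ℂ ℂ (oracleEquiv f)

theorem coe_oracle (f : Z → Bool) : ⇑(oracle (A := A) f) = oracleOp f := rfl

theorem norm_markedPart_sq (f : Z → Bool) (Ψ : EuclideanSpace ℂ (A × Z × Bool)) :
    ‖markedPart f Ψ‖ ^ 2 = ∑ p, if f p.2.1 then ‖Ψ p‖ ^ 2 else 0 := by
  rw [EuclideanSpace.norm_sq_eq]
  congr! 1 with p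
  split_ifs <;> simp [markedPart, *]

theorem norm_oracleOp_sub_self_le (f : Z → Bool) (Ψ : EuclideanSpace ℂ (A × Z × Bool)) :
    ‖oracleOp f Ψ - Ψ‖ ≤ 2 * ‖markedPart f Ψ‖ := by
  rw [oracleOp_sub_self, ← coe_oracle]
  calc _ ≤ ‖oracle f (markedPart f Ψ)‖ + ‖markedPart f Ψ‖ := norm_sub_le _ _
    _ = 2 * ‖markedPart f Ψ‖ := by rw [LinearIsometryEquiv.norm_map]; ring

theorem abs_norm_iterate_oracle_trans_sq_sub_le_sum {P : EuclideanSpace ℂ (A × Z × Bool) →ₗ[ℂ]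
      EuclideanSpace ℂ (A × Z × Bool)} (hP : P.IsSymmetricProjection)
    (U : EuclideanSpace ℂ (A × Z × Bool) ≃ₗᵢ[ℂ] EuclideanSpace ℂ (A × Z × Bool))
    {Ψ₀ : EuclideanSpace ℂ (A × Z × Bool)} (hΨ₀ : ‖Ψ₀‖ = 1) (f : Z → Bool) (q : ℕ) :
    |‖P (((oracle f).trans U)^[q] Ψ₀)‖ ^ 2 - ‖P (U^[q] Ψ₀)‖ ^ 2|
      ≤ ∑ j ∈ range q, ‖oracleOp f (U^[j] Ψ₀) - U^[j] Ψ₀‖ := by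
  have hV := ((oracle f).trans U).norm_iterate_apply q Ψ₀
  have hU := U.norm_iterate_apply q Ψ₀
  rw [hΨ₀] at hV hU
  calc _ ≤ dist (((oracle f).trans U)^[q] Ψ₀) (U^[q] Ψ₀) :=
        (hP.abs_norm_apply_sq_sub_le hV hU).trans_eq (dist_eq_norm _ _).symm
    _ ≤ ∑ j ∈ range q, dist ((oracle f).trans U (U^[j] Ψ₀)) (U (U^[j] Ψ₀)) :=
        ((oracle f).trans U).lipschitz.dist_iterate_le_sum_dist _ _
    _ = _ := by
        simp only [LinearIsometryEquiv.coe_trans, Function.comp_apply, coe_oracle,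
          LinearIsometryEquiv.dist_map]
        simp only [dist_eq_norm]

variable [DecidableEq Z]

theorem sum_bernoulliWeight_mul_norm_markedPart_sq (γ : ℝ)
    (Ψ : EuclideanSpace ℂ (A × Z × Bool)) :
    ∑ f : Z → Bool, bernoulliWeight γ f * ‖markedPart f Ψ‖ ^ 2 = γ * ‖Ψ‖ ^ 2 := by
  simp_rw [norm_markedPart_sq, mul_sum]
  rw [sum_comm, EuclideanSpace.norm_sq_eq, mul_sum]
  exact sum_congr rfl fun p _ => sum_bernoulliWeight_mul_ite γ p.2.1 _

theorem sum_bernoulliWeight_mul_norm_oracleOp_sub_self_le {γ : ℝ} (hγ₀ : 0 ≤ γ) (hγ₁ : γ ≤ 1)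
    (Ψ : EuclideanSpace ℂ (A × Z × Bool)) :
    ∑ f : Z → Bool, bernoulliWeight γ f * ‖oracleOp f Ψ - Ψ‖ ≤ 2 * √γ * ‖Ψ‖ := by
  have hw₀ : ∀ f ∈ (univ : Finset (Z → Bool)), 0 ≤ bernoulliWeight γ f :=
    fun f _ => bernoulliWeight_nonneg hγ₀ hγ₁ f
  have jensen := (convexOn_pow 2).map_sum_le hw₀ (sum_bernoulliWeight γ)
    (p := fun f => ‖oracleOp f Ψ - Ψ‖) fun f _ => norm_nonneg _
  simp only [smul_eq_mul] at jensen
  refine abs_le_of_sq_le_sq' ?_ (by positivity) |>.2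
  calc _ ≤ ∑ f : Z → Bool, bernoulliWeight γ f * ‖oracleOp f Ψ - Ψ‖ ^ 2 := jensen
    _ ≤ ∑ f : Z → Bool, bernoulliWeight γ f * (2 * ‖markedPart f Ψ‖) ^ 2 := by
        gcongr with f
        · exact hw₀ f (mem_univ f)
        · exact norm_oracleOp_sub_self_le f Ψ
    _ = 2 ^ 2 * ∑ f : Z → Bool, bernoulliWeight γ f * ‖markedPart f Ψ‖ ^ 2 := by
        rw [mul_sum]
        exact sum_congr rfl fun f _ => by ring
    _ = (2 * √γ * ‖Ψ‖) ^ 2 := by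
        rw [sum_bernoulliWeight_mul_norm_markedPart_sq, mul_pow, mul_pow, Real.sq_sqrt hγ₀]
        ring

end Oracle

theorem stmt6_general {A Z : Type*} [Fintype A] [Fintype Z] [DecidableEq Z]
    (γ : ℝ) (hγ0 : 0 ≤ γ) (hγ1 : γ ≤ 1) (q : ℕ)
    (U : EuclideanSpace ℂ (A × Z × Bool) ≃ₗᵢ[ℂ] EuclideanSpace ℂ (A × Z × Bool))
    (Ψ₀ : EuclideanSpace ℂ (A × Z × Bool)) (hΨ₀ : ‖Ψ₀‖ = 1)
    (P : EuclideanSpace ℂ (A × Z × Bool) →ₗ[ℂ] EuclideanSpace ℂ (A × Z × Bool))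
    (hPP : P ∘ₗ P = P)
    (hPsa : ∀ x y, (inner ℂ (P x) y : ℂ) = inner ℂ x (P y)) :
    |(∑ f : Z → Bool, (∏ z, if f z then γ else 1 - γ) *
          ‖P ((fun w => U (oracleOp f w))^[q] Ψ₀)‖ ^ 2) -
        ‖P ((fun w => U (oracleOp (fun _ => false) w))^[q] Ψ₀)‖ ^ 2|
      ≤ 2 * q * Real.sqrt γ := by
  have hP : P.IsSymmetricProjection := ⟨hPP, hPsa⟩
  have hw₀ : ∀ f ∈ (univ : Finset (Z → Bool)), 0 ≤ bernoulliWeight γ f :=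
    fun f _ => bernoulliWeight_nonneg hγ0 hγ1 f
  have hN : ⇑((oracle fun _ : Z => false).trans U) = U := by
    ext1 w; simp [coe_oracle, oracleOp_const_false]
  change |∑ f, bernoulliWeight γ f * ‖P (((oracle f).trans U)^[q] Ψ₀)‖ ^ 2
    - ‖P (((oracle fun _ => false).trans U)^[q] Ψ₀)‖ ^ 2| ≤ _
  rw [hN]
  calc _ ≤ ∑ f, bernoulliWeight γ f *
          |‖P (((oracle f).trans U)^[q] Ψ₀)‖ ^ 2 - ‖P (U^[q] Ψ₀)‖ ^ 2| :=
        abs_sum_mul_sub_le _ hw₀ (sum_bernoulliWeight γ) _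
    _ ≤ ∑ f, bernoulliWeight γ f * ∑ j ∈ range q, ‖oracleOp f (U^[j] Ψ₀) - U^[j] Ψ₀‖ := by
        gcongr with f hf
        · exact hw₀ f hf
        · exact abs_norm_iterate_oracle_trans_sq_sub_le_sum hP U hΨ₀ f q
    _ = ∑ j ∈ range q, ∑ f, bernoulliWeight γ f * ‖oracleOp f (U^[j] Ψ₀) - U^[j] Ψ₀‖ := by
        simp_rw [mul_sum]
        exact sum_comm
    _ ≤ ∑ j ∈ range q, 2 * √γ := sum_le_sum fun j _ =>
        (sum_bernoulliWeight_mul_norm_oracleOp_sub_self_le hγ0 hγ1 _).trans_eq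
          (by rw [U.norm_iterate_apply, hΨ₀, mul_one])
    _ = 2 * q * √γ := by simp; ring

theorem stmt6 {A Z : Type*} [Fintype A] [Fintype Z] [DecidableEq Z]
    [Nonempty A] [Nonempty Z]
    (γ : ℝ) (hγ0 : 0 ≤ γ) (hγ1 : γ ≤ 1) (q : ℕ)
    (U : EuclideanSpace ℂ (A × Z × Bool) ≃ₗᵢ[ℂ] EuclideanSpace ℂ (A × Z × Bool))
    (Ψ₀ : EuclideanSpace ℂ (A × Z × Bool)) (hΨ₀ : ‖Ψ₀‖ = 1)
    (P : EuclideanSpace ℂ (A × Z × Bool) →ₗ[ℂ] EuclideanSpace ℂ (A × Z × Bool))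
    (hPP : P ∘ₗ P = P)
    (hPsa : ∀ x y, (inner ℂ (P x) y : ℂ) = inner ℂ x (P y)) :
    |(∑ f : Z → Bool, (∏ z, if f z then γ else 1 - γ) *
          ‖P ((fun w => U (oracleOp f w))^[q] Ψ₀)‖ ^ 2) -
        ‖P ((fun w => U (oracleOp (fun _ => false) w))^[q] Ψ₀)‖ ^ 2|
      ≤ 2 * q * Real.sqrt γ :=
  stmt6_general γ hγ0 hγ1 q U Ψ₀ hΨ₀ P hPP hPsa
end

section
/- Let H be a finite-dimensional complex inner product space, let U and O be unitaries on H, and let P be an orthogonal projection on H such that O v = v for every vector v with P v = 0. Then for every unit vector Ψ ∈ H and every integer q ≥ 0: √(1 − |⟨(U O)^q U Ψ, U^{q+1} Ψ⟩|²) ≤ 2 · Σ_{i=1}^{q} ‖P U^i Ψ‖. -/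
/-!
Write `f = U ∘ O`. Since `P` is idempotent, `w - P w` lies in the kernel of `P` and is fixed by `O`,
so `O w - w = O (P w) - P w` has norm at most `2 ‖P w‖`. Swapping the two iterations
`f^[q] (U Ψ)` and `U^[q] (U Ψ)` one step at a time (the hybrid argument, using that `f` is
1-Lipschitz) bounds their distance by `∑ ‖O (U^[i] Ψ) - U^[i] Ψ‖`, and for unit vectors the
trace distance `√(1 - |⟨u, v⟩|²)` is at most `‖u - v‖`.
-/

lemma sqrt_one_sub_norm_inner_sq_le_norm_sub {𝕜 E : Type*} [RCLike 𝕜] [NormedAddCommGroup E]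
    [InnerProductSpace 𝕜 E] {u v : E} (hu : ‖u‖ = 1) (hv : ‖v‖ = 1) :
    Real.sqrt (1 - ‖(inner 𝕜 u v : 𝕜)‖ ^ 2) ≤ ‖u - v‖ := by
  have hle : ‖(inner 𝕜 u v : 𝕜)‖ ≤ 1 := by
    simpa [hu, hv] using norm_inner_le_norm (𝕜 := 𝕜) u v
  have hre : RCLike.re (inner 𝕜 u v : 𝕜) ≤ ‖(inner 𝕜 u v : 𝕜)‖ := RCLike.re_le_norm _
  have hsq : ‖u - v‖ ^ 2 = 2 - 2 * RCLike.re (inner 𝕜 u v : 𝕜) := by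
    rw [norm_sub_sq (𝕜 := 𝕜), hu, hv]; ring
  refine Real.sqrt_le_iff.mpr ⟨norm_nonneg _, ?_⟩
  nlinarith [norm_nonneg (inner 𝕜 u v : 𝕜)]

lemma dist_iterate_le_sum_dist {X : Type*} [PseudoMetricSpace X] {f : X → X}
    (hf : LipschitzWith 1 f) (g : X → X) (x : X) (n : ℕ) :
    dist (f^[n] x) (g^[n] x) ≤ ∑ i ∈ Finset.range n, dist (f (g^[i] x)) (g (g^[i] x)) := by
  induction n with
  | zero => simp
  | succ n ih =>
    rw [Finset.sum_range_succ, Function.iterate_succ_apply', Function.iterate_succ_apply']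
    calc dist (f (f^[n] x)) (g (g^[n] x))
        ≤ dist (f (f^[n] x)) (f (g^[n] x)) + dist (f (g^[n] x)) (g (g^[n] x)) :=
          dist_triangle _ _ _
      _ ≤ dist (f^[n] x) (g^[n] x) + dist (f (g^[n] x)) (g (g^[n] x)) := by
          gcongr; simpa using hf.dist_le_mul (f^[n] x) (g^[n] x)
      _ ≤ _ := by gcongr

lemma norm_iterate_eq {E : Type*} [Norm E] {f : E → E} (hf : ∀ x, ‖f x‖ = ‖x‖) (x : E)
    (n : ℕ) : ‖f^[n] x‖ = ‖x‖ := by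
  induction n with
  | zero => rfl
  | succ n ih => rw [Function.iterate_succ_apply', hf, ih]

lemma norm_map_sub_self_le_of_ker_fixed {𝕜 E : Type*} [NormedField 𝕜] [SeminormedAddCommGroup E]
    [NormedSpace 𝕜 E] (O : E →ₗᵢ[𝕜] E) {P : E →ₗ[𝕜] E} (hPP : P ∘ₗ P = P)
    (hO : ∀ v, P v = 0 → O v = v) (w : E) : ‖O w - w‖ ≤ 2 * ‖P w‖ := by
  have hker : P (w - P w) = 0 := by
    rw [map_sub, ← LinearMap.comp_apply, hPP, sub_self]
  have hfix : O w - w = O (P w) - P w := by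
    have := hO _ hker
    rw [map_sub] at this
    rw [← sub_eq_zero, ← sub_eq_zero.mpr this]; abel
  calc ‖O w - w‖ ≤ ‖O (P w)‖ + ‖P w‖ := hfix ▸ norm_sub_le _ _
    _ = 2 * ‖P w‖ := by rw [O.norm_map]; ring

theorem stmt7_general {E : Type*} [NormedAddCommGroup E] [InnerProductSpace ℂ E]
    (U O : E ≃ₗᵢ[ℂ] E) (P : E →ₗ[ℂ] E) (hPP : P ∘ₗ P = P)
    (hO : ∀ v, P v = 0 → O v = v)
    (Ψ : E) (hΨ : ‖Ψ‖ = 1) (q : ℕ) :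
    Real.sqrt (1 - ‖(inner ℂ ((fun w => U (O w))^[q] (U Ψ)) ((⇑U)^[q + 1] Ψ) : ℂ)‖ ^ 2)
      ≤ 2 * ∑ i ∈ Finset.Icc 1 q, ‖P ((⇑U)^[i] Ψ)‖ := by
  have hUO : LipschitzWith 1 (fun w => U (O w)) := (U.isometry.comp O.isometry).lipschitz
  have hunit_UO : ‖(fun w => U (O w))^[q] (U Ψ)‖ = 1 := by
    rw [norm_iterate_eq (fun x => by simp), U.norm_map, hΨ]
  have hunit_U : ‖(⇑U)^[q + 1] Ψ‖ = 1 := by rw [norm_iterate_eq U.norm_map, hΨ]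
  calc _ ≤ ‖(fun w => U (O w))^[q] (U Ψ) - (⇑U)^[q + 1] Ψ‖ :=
        sqrt_one_sub_norm_inner_sq_le_norm_sub hunit_UO hunit_U
    _ = dist ((fun w => U (O w))^[q] (U Ψ)) ((⇑U)^[q] (U Ψ)) := by
        rw [dist_eq_norm, Function.iterate_succ_apply]
    _ ≤ ∑ i ∈ Finset.range q, dist (U (O ((⇑U)^[i] (U Ψ)))) (U ((⇑U)^[i] (U Ψ))) :=
        dist_iterate_le_sum_dist hUO _ _ q
    _ ≤ ∑ i ∈ Finset.range q, 2 * ‖P ((⇑U)^[1 + i] Ψ)‖ := by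
        gcongr with i
        rw [dist_eq_norm, ← map_sub, U.norm_map, ← Function.iterate_succ_apply, add_comm]
        exact norm_map_sub_self_le_of_ker_fixed O.toLinearIsometry hPP hO _
    _ = 2 * ∑ i ∈ Finset.Icc 1 q, ‖P ((⇑U)^[i] Ψ)‖ := by
        rw [← Finset.mul_sum, ← Finset.Ico_add_one_right_eq_Icc, Finset.sum_Ico_eq_sum_range,
          Nat.add_sub_cancel]

theorem stmt7 {E : Type*} [NormedAddCommGroup E] [InnerProductSpace ℂ E]
    [FiniteDimensional ℂ E]
    (U O : E ≃ₗᵢ[ℂ] E) (P : E →ₗ[ℂ] E) (hPP : P ∘ₗ P = P)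
    (hPsa : ∀ x y, (inner ℂ (P x) y : ℂ) = inner ℂ x (P y))
    (hO : ∀ v, P v = 0 → O v = v)
    (Ψ : E) (hΨ : ‖Ψ‖ = 1) (q : ℕ) :
    Real.sqrt (1 - ‖(inner ℂ ((fun w => U (O w))^[q] (U Ψ)) ((⇑U)^[q + 1] Ψ) : ℂ)‖ ^ 2)
      ≤ 2 * ∑ i ∈ Finset.Icc 1 q, ‖P ((⇑U)^[i] Ψ)‖ :=
  stmt7_general U O P hPP hO Ψ hΨ q
end

section
/- Let e₀ and e₁ be orthonormal vectors in a complex inner product space, and for θ ∈ ℝ define φ_θ := (sin θ)·e₁ + (cos θ)·e₀. Then for all real numbers β and γ: φ_{−β} − 2⟨φ_γ, φ_{−β}⟩·φ_γ = −φ_{β+2γ}. -/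
/-! The vectors `φ_θ` trace the unit circle of the real plane spanned by `e₀, e₁`, so
`⟪φ_γ, φ_δ⟫ = cos (γ - δ)` and the map `v ↦ v - 2⟪φ_γ, v⟫ φ_γ` is the reflection in the line
orthogonal to `φ_γ`. On coordinates this is the sum-to-product identities
`sin (β + 2γ) - sin β = 2 cos (β + γ) sin γ` and `cos (β + 2γ) + cos β = 2 cos (β + γ) cos γ`. -/

section CircleVec

variable {E : Type*}

noncomputable def circleVec [AddCommGroup E] [Module ℂ E] (e₀ e₁ : E) (θ : ℝ) : E :=
  (Real.sin θ : ℂ) • e₁ + (Real.cos θ : ℂ) • e₀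

theorem circleVec_neg_sub_two_cos_smul [AddCommGroup E] [Module ℂ E] (e₀ e₁ : E) (β γ : ℝ) :
    circleVec e₀ e₁ (-β) - (2 * (Real.cos (γ + β) : ℂ)) • circleVec e₀ e₁ γ
      = -circleVec e₀ e₁ (β + 2 * γ) := by
  have hsin : (Real.sin (-β) : ℂ) - 2 * Real.cos (γ + β) * Real.sin γ
      = -Real.sin (β + 2 * γ) := by
    push_cast [Real.sin_neg, Real.cos_add, Real.sin_add, Real.sin_two_mul, Real.cos_two_mul]
    linear_combination 2 * Complex.sin β * Complex.sin_sq_add_cos_sq γ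
  have hcos : (Real.cos (-β) : ℂ) - 2 * Real.cos (γ + β) * Real.cos γ
      = -Real.cos (β + 2 * γ) := by
    push_cast [Real.cos_neg, Real.cos_add, Real.sin_add, Real.sin_two_mul, Real.cos_two_mul]
    ring
  unfold circleVec
  linear_combination (norm := module) hsin • e₁ + hcos • e₀

theorem inner_circleVec [NormedAddCommGroup E] [InnerProductSpace ℂ E] {e₀ e₁ : E}
    (h0 : ‖e₀‖ = 1) (h1 : ‖e₁‖ = 1) (horth : inner ℂ e₀ e₁ = 0) (γ δ : ℝ) :
    inner ℂ (circleVec e₀ e₁ γ) (circleVec e₀ e₁ δ) = Real.cos (γ - δ) := by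
  have h10 : inner ℂ e₁ e₀ = 0 := inner_eq_zero_symm.mp horth
  simp only [circleVec, inner_add_left, inner_add_right, inner_smul_left, inner_smul_right,
    inner_self_eq_norm_sq_to_K, h0, h1, horth, h10, Complex.conj_ofReal]
  push_cast [Real.cos_sub]
  ring

end CircleVec

theorem stmt8 {E : Type*} [NormedAddCommGroup E] [InnerProductSpace ℂ E]
    (e₀ e₁ : E) (h0 : ‖e₀‖ = 1) (h1 : ‖e₁‖ = 1) (horth : (inner ℂ e₀ e₁ : ℂ) = 0)
    (β γ : ℝ) :
    let φ : ℝ → E := fun θ => (Real.sin θ : ℂ) • e₁ + (Real.cos θ : ℂ) • e₀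
    φ (-β) - (2 * (inner ℂ (φ γ) (φ (-β)) : ℂ)) • φ γ = -φ (β + 2 * γ) := by
  change circleVec e₀ e₁ (-β) - (2 * inner ℂ (circleVec e₀ e₁ γ) (circleVec e₀ e₁ (-β))) •
    circleVec e₀ e₁ γ = -circleVec e₀ e₁ (β + 2 * γ)
  rw [inner_circleVec h0 h1 horth, sub_neg_eq_add]
  exact circleVec_neg_sub_two_cos_smul e₀ e₁ β γ
end

section
/- For all integers N, k, l with 0 ≤ l ≤ k ≤ N: Σ_{i=0}^{k} C(k,i) · C(N−k,i) · (k−i)·(k−i−1)···(k−i−l+1) = k·(k−1)···(k−l+1) · C(N−l, N−k), where the falling factorial (m)·(m−1)···(m−l+1) is understood to be 0 when m < l and to be 1 when l = 0, and C(·,·) denotes the binomial coefficient. -/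
/-!
Trinomial revision, `C(k,i) (k-i)(k-i-1)⋯(k-i-l+1) = k(k-1)⋯(k-l+1) C(k-l,i)` (both sides count
an ordered `l`-tuple of distinct elements of a `k`-set together with a disjoint `i`-subset), pulls
the falling factorial out of the sum. What remains, `∑ C(k-l,i) C(N-k,i)`, is Vandermonde's
identity for `C(N-l, N-k)`.
-/

namespace Nat

theorem choose_mul_choose_sub_comm (n i l : ℕ) :
    n.choose i * (n - i).choose l = n.choose l * (n - l).choose i := by
  have hi := choose_mul (n := n) (le_add_right i l)
  have hl := choose_mul (n := n) (le_add_left l i)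
  rw [Nat.add_sub_cancel_left] at hi
  rw [Nat.add_sub_cancel] at hl
  rw [← hi, ← hl, choose_symm_add]

theorem choose_mul_descFactorial_sub (n i l : ℕ) :
    n.choose i * (n - i).descFactorial l = n.descFactorial l * (n - l).choose i := by
  rw [descFactorial_eq_factorial_mul_choose, descFactorial_eq_factorial_mul_choose,
    Nat.mul_left_comm, choose_mul_choose_sub_comm, Nat.mul_assoc]

theorem sum_range_choose_mul_choose (a b : ℕ) {n : ℕ} (hn : a < n) :
    ∑ i ∈ Finset.range n, a.choose i * b.choose i = (a + b).choose b := by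
  have hvanish : ∀ i ≥ a + 1, a.choose i * b.choose i = 0 := fun i hi => by
    rw [choose_eq_zero_of_lt hi, Nat.zero_mul]
  have hvanish' : ∀ i ≥ b + 1, a.choose i * b.choose i = 0 := fun i hi => by
    rw [choose_eq_zero_of_lt hi, Nat.mul_zero]
  rw [Finset.eventually_constant_sum hvanish hn,
    ← Finset.eventually_constant_sum hvanish (by omega : a + 1 ≤ a + b + 1),
    Finset.eventually_constant_sum hvanish' (by omega : b + 1 ≤ a + b + 1),
    add_choose_eq, Finset.Nat.sum_antidiagonal_eq_sum_range_succ_mk]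
  refine Finset.sum_congr rfl fun i hi => ?_
  rw [choose_symm (Finset.mem_range_succ_iff.mp hi)]

end Nat

theorem stmt10 (N k l : ℕ) (hlk : l ≤ k) (hkN : k ≤ N) :
    ∑ i ∈ Finset.range (k + 1),
        k.choose i * (N - k).choose i * (k - i).descFactorial l
      = k.descFactorial l * (N - l).choose (N - k) := by
  calc ∑ i ∈ Finset.range (k + 1), k.choose i * (N - k).choose i * (k - i).descFactorial l
      = ∑ i ∈ Finset.range (k + 1), k.descFactorial l * ((k - l).choose i * (N - k).choose i) := by
        refine Finset.sum_congr rfl fun i _ => ?_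
        rw [Nat.mul_right_comm, Nat.choose_mul_descFactorial_sub, Nat.mul_assoc]
    _ = k.descFactorial l * (k - l + (N - k)).choose (N - k) := by
        rw [← Finset.mul_sum, Nat.sum_range_choose_mul_choose _ _ (by omega)]
    _ = k.descFactorial l * (N - l).choose (N - k) := by
        rw [show k - l + (N - k) = N - l by omega]
end

section
/- Fix integers N and k with 1 ≤ k ≤ N, and integers i, i′ with 0 ≤ i ≤ k and 0 ≤ i′ ≤ k. Let X := {1,…,N}, let D be the set of all strings z ∈ {0,1}^N of Hamming weight k, and for z, z′ ∈ D write |z − z′| for half the Hamming distance between z and z′. Let A_i be the D × D matrix with (z,z′)-entry equal to 1 if |z − z′| = i and 0 otherwise. For z ∈ D let Ψ(z) := k^{−1/2} Σ_{x : z_x = 1} e_x ∈ ℂ^X, and let B_{i′} := Σ_{z,z′ ∈ D, |z−z′| = i′} (Ψ(z) ⊗ e_z)(Ψ(z′) ⊗ e_{z′})* be a matrix on ℂ^{X × D}. Then Tr((Id_{ℂ^X} ⊗ A_i) · B_{i′}) = δ_{i,i′} · C(N,k) · C(k,i) · C(N−k,i) · (k−i)/k. -/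
/-- The set `D` of strings `z ∈ {0,1}^N` of Hamming weight `k`. -/
abbrev DSet (N k : ℕ) : Type :=
  {z : Fin N → Bool // (Finset.univ.filter fun x => z x = true).card = k}

/-- The vector `Ψ(z) = k^{-1/2} Σ_{x : z_x = 1} e_x ∈ ℂ^X`. -/
noncomputable def PsiV (N k : ℕ) (z : DSet N k) : Fin N → ℂ :=
  fun x => if z.val x = true then ((Real.sqrt k : ℝ)⁻¹ : ℂ) else 0

/-!
`(Id ⊗ A_i) B_{i'}` has trace `Σ_{z,z'} [|z - z'| = i'] (A_i)_{z'z} ⟪Ψ(z'), Ψ(z)⟫`, and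
`⟪Ψ(z'), Ψ(z)⟫ = |supp z ∩ supp z'| / k`, which is `(k - i)/k` when `|z - z'| = i`. So the trace
vanishes unless `i = i'`, and then it is `(k - i)/k` times the number of ordered pairs at distance
`i`: there are `C(N,k)` choices of `z`, and `z'` is determined by the `i` ones of `z` it turns off
and the `i` zeros of `z` it turns on, giving `C(k,i) C(N-k,i)` choices.
-/

open Finset Matrix
open scoped Kronecker

section SetAlgebra

variable {α : Type*} [DecidableEq α] {S A B : Finset α}

lemma sdiff_sdiff_union_of_subset (hA : A ⊆ S) (hB : Disjoint B S) : S \ (S \ A ∪ B) = A := by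
  rw [disjoint_left] at hB
  ext x
  simp only [mem_sdiff, mem_union]
  grind

lemma sdiff_union_sdiff_of_disjoint (hB : Disjoint B S) : (S \ A ∪ B) \ S = B := by
  rw [disjoint_left] at hB
  ext x
  simp only [mem_sdiff, mem_union]
  grind

lemma card_sdiff_union_of_subset (hA : A ⊆ S) (hB : Disjoint B S) :
    #(S \ A ∪ B) = #S - #A + #B := by
  rw [card_union_of_disjoint (disjoint_of_subset_left sdiff_subset hB.symm),
    card_sdiff_of_subset hA]

lemma sdiff_sdiff_union_sdiff (S T : Finset α) : S \ (S \ T) ∪ T \ S = T := by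
  ext
  simp only [mem_union, mem_sdiff]
  tauto

end SetAlgebra

section BoolFun

variable {α : Type*} [Fintype α]

-- An abbreviation, so that lemmas about `{z // #(trueSet z) = k}` apply verbatim to `DSet N k`.
abbrev trueSet (z : α → Bool) : Finset α := {x | z x = true}

@[simp] lemma mem_trueSet {z : α → Bool} {x : α} : x ∈ trueSet z ↔ z x = true := by
  simp [trueSet]

variable [DecidableEq α]

@[simp] lemma trueSet_decide_mem (s : Finset α) : trueSet (fun x => decide (x ∈ s)) = s := by
  ext; simp

lemma hammingDist_eq_card_sdiff_add_card_sdiff (z z' : α → Bool) :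
    hammingDist z z' = #(trueSet z \ trueSet z') + #(trueSet z' \ trueSet z) := by
  rw [hammingDist, ← card_union_of_disjoint disjoint_sdiff_sdiff]
  congr 1
  ext x
  cases h : z x <;> cases h' : z' x <;> simp [h, h']

lemma hammingDist_eq_two_mul_card_sdiff {z z' : α → Bool}
    (h : #(trueSet z) = #(trueSet z')) :
    hammingDist z z' = 2 * #(trueSet z' \ trueSet z) := by
  rw [hammingDist_eq_card_sdiff_add_card_sdiff, card_sdiff_comm h, two_mul]

lemma card_inter_trueSet_of_hammingDist_eq {k i : ℕ} {z z' : α → Bool}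
    (hz : #(trueSet z) = k) (hz' : #(trueSet z') = k) (hd : hammingDist z z' = 2 * i) :
    #(trueSet z ∩ trueSet z') = k - i := by
  rw [hammingDist_eq_two_mul_card_sdiff (hz.trans hz'.symm)] at hd
  have := card_sdiff_add_card_inter (trueSet z') (trueSet z)
  rw [inter_comm] at this
  omega

def trueSetEquiv (k : ℕ) : {z : α → Bool // #(trueSet z) = k} ≃ {s : Finset α // #s = k} where
  toFun z := ⟨trueSet z.1, z.2⟩
  invFun s := ⟨fun x => decide (x ∈ s.1), by simpa using s.2⟩
  left_inv z := by ext x; cases h : z.1 x <;> simp [h]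
  right_inv s := by ext; simp

lemma card_subtype_card_trueSet_eq (k : ℕ) :
    Fintype.card {z : α → Bool // #(trueSet z) = k} = (Fintype.card α).choose k := by
  rw [Fintype.card_congr (trueSetEquiv k), Fintype.card_finset_len]

-- `z'` is determined by the ones of `z` it turns off and the zeros of `z` it turns on.
lemma card_filter_hammingDist_eq {k : ℕ} (z : {z : α → Bool // #(trueSet z) = k}) (i : ℕ) :
    #{z' : {z : α → Bool // #(trueSet z) = k} | hammingDist z.1 z'.1 = 2 * i}
      = k.choose i * (Fintype.card α - k).choose i := by
  set S := trueSet z.1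
  have hS : #S = k := z.2
  have hdist (z' : {z : α → Bool // #(trueSet z) = k}) :
      hammingDist z.1 z'.1 = 2 * #(trueSet z'.1 \ S) :=
    hammingDist_eq_two_mul_card_sdiff (z.2.trans z'.2.symm)
  have hcard : #(powersetCard i S ×ˢ powersetCard i Sᶜ)
      = k.choose i * (Fintype.card α - k).choose i := by
    rw [card_product, card_powersetCard, card_powersetCard, card_compl, hS]
  rw [← hcard]
  refine card_bij' (fun z' _ => (S \ trueSet z'.1, trueSet z'.1 \ S))
    (fun AB hAB => ⟨fun x => decide (x ∈ S \ AB.1 ∪ AB.2), ?_⟩) ?_ ?_ ?_ ?_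
  · simp only [mem_product, mem_powersetCard, subset_compl_iff_disjoint_right] at hAB
    rw [trueSet_decide_mem, card_sdiff_union_of_subset hAB.1.1 hAB.2.1]
    have := card_le_card hAB.1.1
    omega
  · intro z' hz'
    simp only [mem_filter, mem_univ, true_and, hdist] at hz'
    simp only [mem_product, mem_powersetCard, subset_compl_iff_disjoint_right]
    exact ⟨⟨sdiff_subset, (card_sdiff_comm (hS.trans z'.2.symm)).trans (by omega)⟩,
      sdiff_disjoint, by omega⟩
  · intro AB hAB
    simp only [mem_product, mem_powersetCard, subset_compl_iff_disjoint_right] at hAB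
    simp only [mem_filter, mem_univ, true_and, hdist, trueSet_decide_mem,
      sdiff_union_sdiff_of_disjoint hAB.2.1, hAB.2.2]
  · intro z' _
    refine Subtype.ext (funext fun x => ?_)
    simp only [sdiff_sdiff_union_sdiff]
    cases h : z'.1 x <;> simp [h]
  · intro AB hAB
    simp only [mem_product, mem_powersetCard, subset_compl_iff_disjoint_right] at hAB
    simp only [trueSet_decide_mem, sdiff_sdiff_union_of_subset hAB.1.1 hAB.2.1,
      sdiff_union_sdiff_of_disjoint hAB.2.1]

end BoolFun

section Trace

variable {R X D : Type*} [CommSemiring R] [StarRing R] [Fintype X] [Fintype D]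
  [DecidableEq X] [DecidableEq D]

lemma trace_one_kronecker_mul_vecMulVec (A : Matrix D D R) (ψ ψ' : X → R) (z z' : D) :
    trace ((1 : Matrix X X R) ⊗ₖ A *
      vecMulVec (fun p : X × D => ψ p.1 * if p.2 = z then 1 else 0)
        (fun q : X × D => starRingEnd R (ψ' q.1 * if q.2 = z' then 1 else 0)))
      = A z' z * ∑ x, ψ x * starRingEnd R (ψ' x) := by
  rw [mul_vecMulVec, trace_vecMulVec]
  simp only [dotProduct, mulVec, kroneckerMap_apply, one_apply, Fintype.sum_prod_type, mul_sum,
    ite_mul, mul_ite, one_mul, zero_mul, mul_zero, mul_one, map_zero, apply_ite (starRingEnd R),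
    sum_ite_eq, sum_ite_eq', mem_univ, if_true, mul_assoc]

end Trace

lemma sum_PsiV_mul_conj {N k : ℕ} (z z' : DSet N k) :
    ∑ x, PsiV N k z x * starRingEnd ℂ (PsiV N k z' x)
      = #(trueSet z.1 ∩ trueSet z'.1) / k := by
  have hsq : (Real.sqrt k : ℂ)⁻¹ * (Real.sqrt k : ℂ)⁻¹ = (k : ℂ)⁻¹ := by
    rw [← mul_inv, ← Complex.ofReal_mul, Real.mul_self_sqrt k.cast_nonneg, Complex.ofReal_natCast]
  have hterm (x : Fin N) : PsiV N k z x * starRingEnd ℂ (PsiV N k z' x)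
      = if x ∈ trueSet z.1 ∩ trueSet z'.1 then (k : ℂ)⁻¹ else 0 := by
    cases hx : z.1 x <;> cases hx' : z'.1 x <;> simp [PsiV, hx, hx', hsq]
  rw [Fintype.sum_congr _ _ hterm, sum_ite_mem, univ_inter, sum_const, nsmul_eq_mul, div_eq_mul_inv]

theorem stmt11_general (N k : ℕ)
    (i i' : ℕ) :
    let M1 : Matrix (Fin N × DSet N k) (Fin N × DSet N k) ℂ :=
      Matrix.of fun p q =>
        (if p.1 = q.1 then (1 : ℂ) else 0) *
          (if hammingDist p.2.val q.2.val = 2 * i then 1 else 0)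
    let B : Matrix (Fin N × DSet N k) (Fin N × DSet N k) ℂ :=
      ∑ z : DSet N k, ∑ z' : DSet N k,
        if hammingDist z.val z'.val = 2 * i' then
          Matrix.vecMulVec
            (fun p : Fin N × DSet N k => PsiV N k z p.1 * (if p.2 = z then 1 else 0))
            (fun q : Fin N × DSet N k =>
              (starRingEnd ℂ) (PsiV N k z' q.1 * (if q.2 = z' then 1 else 0)))
        else 0
    Matrix.trace (M1 * B)
      = (if i = i' then (1 : ℂ) else 0) * (N.choose k : ℂ) * (k.choose i : ℂ) *
          ((N - k).choose i : ℂ) * ((k - i : ℕ) : ℂ) / (k : ℂ) := by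
  intro M1 B
  set A : Matrix (DSet N k) (DSet N k) ℂ :=
    of fun w w' => if hammingDist w.1 w'.1 = 2 * i then 1 else 0
  have hM1 : M1 = 1 ⊗ₖ A := by
    ext p q
    simp [M1, A, one_apply]
  calc trace (M1 * B)
      = ∑ z : DSet N k, ∑ z' : DSet N k, if hammingDist z.1 z'.1 = 2 * i' then
          A z' z * (#(trueSet z.1 ∩ trueSet z'.1) / k : ℂ) else 0 := by
        simp only [B, mul_sum, trace_sum]
        refine sum_congr rfl fun z _ => sum_congr rfl fun z' _ => ?_
        split_ifs
        · rw [hM1, trace_one_kronecker_mul_vecMulVec, sum_PsiV_mul_conj]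
        · rw [mul_zero, trace_zero]
    _ = ∑ z : DSet N k, ∑ z' : DSet N k,
          if i = i' ∧ hammingDist z.1 z'.1 = 2 * i then ((k - i : ℕ) / k : ℂ) else 0 := by
        refine sum_congr rfl fun z _ => sum_congr rfl fun z' _ => ?_
        simp only [A, of_apply, hammingDist_comm z'.1]
        by_cases hd : hammingDist z.1 z'.1 = 2 * i
        · rw [card_inter_trueSet_of_hammingDist_eq z.2 z'.2 hd]
          split_ifs <;> simp_all
        · split_ifs <;> simp_all
    _ = _ := by
        split_ifs with hii
        · subst hii
          simp only [true_and, ← sum_filter, sum_const, card_filter_hammingDist_eq, nsmul_eq_mul,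
            card_univ, card_subtype_card_trueSet_eq, Fintype.card_fin]
          push_cast
          ring
        · simp [hii]

theorem stmt11 (N k : ℕ) (hk1 : 1 ≤ k) (hkN : k ≤ N)
    (i i' : ℕ) (hi : i ≤ k) (hi' : i' ≤ k) :
    let M1 : Matrix (Fin N × DSet N k) (Fin N × DSet N k) ℂ :=
      Matrix.of fun p q =>
        (if p.1 = q.1 then (1 : ℂ) else 0) *
          (if hammingDist p.2.val q.2.val = 2 * i then 1 else 0)
    let B : Matrix (Fin N × DSet N k) (Fin N × DSet N k) ℂ :=
      ∑ z : DSet N k, ∑ z' : DSet N k,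
        if hammingDist z.val z'.val = 2 * i' then
          Matrix.vecMulVec
            (fun p : Fin N × DSet N k => PsiV N k z p.1 * (if p.2 = z then 1 else 0))
            (fun q : Fin N × DSet N k =>
              (starRingEnd ℂ) (PsiV N k z' q.1 * (if q.2 = z' then 1 else 0)))
        else 0
    Matrix.trace (M1 * B)
      = (if i = i' then (1 : ℂ) else 0) * (N.choose k : ℂ) * (k.choose i : ℂ) *
          ((N - k).choose i : ℂ) * ((k - i : ℕ) : ℂ) / (k : ℂ) :=
  stmt11_general N k i i'
end

section
/- Let N ≥ 3 and k be integers with 2 ≤ k ≤ N. Then for all complex numbers α and β: 2·(1 + (k−1)/(N−1))·|α|² + (N−2)·(1 + (N−3)(k−1)/(N−1))·|β|² + 4(N−2)·((k−1)/(N−1))·Re(α·conj(β)) ≥ |2α + (k−2)β|² / 2. -/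
/-!
Multiplied by `N - 1`, the difference of the two sides is the Hermitian form
`a ‖α‖² + b Re(α β̄) + c ‖β‖²` with `a = 2(k - 1) > 0` and discriminant
`b² - 4ac = -4 (N - 1) k (k - 2) (N - k)`, which is nonpositive because `2 ≤ k ≤ N`.
Completing the square, `4a` times such a form is `‖2aα + bβ‖² - (b² - 4ac) ‖β‖² ≥ 0`.
-/

open ComplexConjugate

namespace Complex

theorem norm_ofReal_mul_add_ofReal_mul_sq (p q : ℝ) (α β : ℂ) :
    ‖(p : ℂ) * α + (q : ℂ) * β‖ ^ 2 =
      p ^ 2 * ‖α‖ ^ 2 + 2 * p * q * (α * conj β).re + q ^ 2 * ‖β‖ ^ 2 := by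
  have hcross : ((p : ℂ) * α * conj ((q : ℂ) * β)).re = p * q * (α * conj β).re := by
    rw [map_mul, conj_ofReal, show (p : ℂ) * α * (q * conj β) = ((p * q : ℝ) : ℂ) * (α * conj β) by
      push_cast; ring, re_ofReal_mul]
  simp only [Complex.sq_norm, normSq_add, normSq_mul, normSq_ofReal, hcross]
  ring

theorem quadraticForm_nonneg_of_discrim_nonpos {a b c : ℝ} (ha : 0 < a)
    (hdisc : discrim a b c ≤ 0) (α β : ℂ) :
    0 ≤ a * ‖α‖ ^ 2 + b * (α * conj β).re + c * ‖β‖ ^ 2 := by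
  refine nonneg_of_mul_nonneg_right ?_ (by positivity : (0 : ℝ) < 4 * a)
  calc 0 ≤ ‖((2 * a : ℝ) : ℂ) * α + (b : ℂ) * β‖ ^ 2 + -discrim a b c * ‖β‖ ^ 2 := by
        have := neg_nonneg.2 hdisc
        positivity
    _ = 4 * a * (a * ‖α‖ ^ 2 + b * (α * conj β).re + c * ‖β‖ ^ 2) := by
        rw [norm_ofReal_mul_add_ofReal_mul_sq, discrim]
        ring

end Complex

theorem stmt15 (N k : ℕ) (hN : 3 ≤ N) (hk2 : 2 ≤ k) (hkN : k ≤ N) (α β : ℂ) :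
    2 * (1 + ((k : ℝ) - 1) / ((N : ℝ) - 1)) * ‖α‖ ^ 2 +
        ((N : ℝ) - 2) * (1 + ((N : ℝ) - 3) * ((k : ℝ) - 1) / ((N : ℝ) - 1)) *
          ‖β‖ ^ 2 +
        4 * ((N : ℝ) - 2) * (((k : ℝ) - 1) / ((N : ℝ) - 1)) * (α * (starRingEnd ℂ) β).re
      ≥ ‖2 * α + ((((k : ℝ) - 2) : ℝ) : ℂ) * β‖ ^ 2 / 2 := by
  have hn : (3 : ℝ) ≤ N := by exact_mod_cast hN
  have hK : (2 : ℝ) ≤ k := by exact_mod_cast hk2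
  have hKn : (k : ℝ) ≤ N := by exact_mod_cast hkN
  set n : ℝ := (N : ℝ)
  set K : ℝ := (k : ℝ)
  have hdisc : discrim (2 * (K - 1)) (4 * (n - 2) * (K - 1) - 2 * (n - 1) * (K - 2))
      ((n - 2) * ((n - 1) + (n - 3) * (K - 1)) - (n - 1) * (K - 2) ^ 2 / 2) ≤ 0 := by
    rw [discrim, ← neg_nonneg]
    have : 0 ≤ 4 * (n - 1) * K * (K - 2) * (n - K) :=
      mul_nonneg (mul_nonneg (mul_nonneg (by linarith) (by linarith)) (by linarith)) (by linarith)
    convert this using 1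
    ring
  have hform := Complex.quadraticForm_nonneg_of_discrim_nonpos (by linarith) hdisc α β
  have hrhs := Complex.norm_ofReal_mul_add_ofReal_mul_sq 2 (K - 2) α β
  rw [Complex.ofReal_ofNat] at hrhs
  rw [ge_iff_le, ← sub_nonneg, hrhs]
  refine (div_nonneg hform (by linarith : (0 : ℝ) ≤ n - 1)).trans_eq ?_
  have : n - 1 ≠ 0 := by linarith
  field_simp
  ring
end
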